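/- arXiv:2211.04589 — 6 statements merged into one kernel-verified Lean document; each statement's English description precedes it below -/
import Mathlib

section
/- Let w_1, …, w_m ∈ ℝ^D be unit vectors and, for n ∈ ℕ, let G_n ∈ ℝ^{m×m} be the symmetric matrix with entries (G_n)_{kℓ} = ⟨w_k, w_ℓ⟩^n. Then for every ñ ∈ ℕ (ñ ≥ 0), the smallest eigenvalue satisfies λ_min(G_{2+ñ}) ≥ λ_min(G_2). In particular, if G_2 is invertible with operator norm ‖G_2^{−1}‖ ≤ c₃, then every G_{2+ñ} is invertible with ‖G_{2+ñ}^{−1}‖ ≤ c₃. -/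
open scoped BigOperators

noncomputable def opNorm {n : Type*} [Fintype n] [DecidableEq n] (A : Matrix n n ℝ) : ℝ :=
  ‖Matrix.toEuclideanCLM (𝕜 := ℝ) A‖

/-- Smallest eigenvalue of a symmetric matrix, via the Rayleigh quotient. -/
noncomputable def minEig {m : ℕ} (A : Matrix (Fin m) (Fin m) ℝ) : ℝ :=
  ⨅ x : {x : Fin m → ℝ // ∑ i, (x i) ^ 2 = 1}, ∑ k, ∑ l, x.1 k * A k l * x.1 l

def dot {d : ℕ} (v w : Fin d → ℝ) : ℝ := ∑ i, v i * w i

/-- Order-`n` Gram matrix `(G_n)_{kℓ} = ⟨w_k, w_ℓ⟩^n`. -/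
noncomputable def gram {D m : ℕ} (w : Fin m → Fin D → ℝ) (n : ℕ) :
    Matrix (Fin m) (Fin m) ℝ := Matrix.of fun k l => (dot (w k) (w l)) ^ n

/-!
Expanding `⟨w_k, w_ℓ⟩^(n+ñ) = ⟨w_k, w_ℓ⟩^n ∑_f ∏_j w_k(f j) w_ℓ(f j)` over `f : Fin ñ → Fin D`
writes `yᵀ G_{n+ñ} y` as `∑_f z_fᵀ G_n z_f` with `z_f k = y_k ∏_j w_k(f j)`. For unit vectors
`w_k` the `z_f` have total squared norm `‖y‖²`, so `λ_min(G_n) ‖y‖² ≤ yᵀ G_{n+ñ} y`.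

For the inverses: Cauchy–Schwarz for the semidefinite form `G_2` at `x` and `G_2⁻¹ x` gives
`‖x‖² ≤ ‖G_2⁻¹‖ xᵀ G_2 x`, i.e. `λ_min(G_2) ≥ ‖G_2⁻¹‖⁻¹`. Conversely `λ_min(B) ≥ μ > 0` forces
`μ ‖z‖ ≤ ‖B z‖`, so `B` is invertible with `‖B⁻¹‖ ≤ μ⁻¹`.
-/

open Matrix hiding gram
open WithLp

section Euclidean

variable {ι : Type*} [Fintype ι]

lemma norm_toLp_sq (x : ι → ℝ) : ‖toLp 2 x‖ ^ 2 = x ⬝ᵥ x := by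
  rw [EuclideanSpace.real_norm_sq_eq]
  simp [dotProduct, sq]

lemma real_dotProduct_self_nonneg (x : ι → ℝ) : 0 ≤ x ⬝ᵥ x :=
  norm_toLp_sq x ▸ sq_nonneg _

lemma abs_dotProduct_le_norm_mul_norm (x y : ι → ℝ) :
    |x ⬝ᵥ y| ≤ ‖toLp 2 x‖ * ‖toLp 2 y‖ := by
  simpa [EuclideanSpace.inner_toLp_toLp, dotProduct_comm] using
    abs_real_inner_le_norm (toLp 2 x) (toLp 2 y)

lemma mul_norm_le_norm_mulVec {B : Matrix ι ι ℝ} {μ : ℝ}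
    (h : ∀ z, μ * (z ⬝ᵥ z) ≤ z ⬝ᵥ B *ᵥ z) (z : ι → ℝ) :
    μ * ‖toLp 2 z‖ ≤ ‖toLp 2 (B *ᵥ z)‖ := by
  have hsq : μ * ‖toLp 2 z‖ * ‖toLp 2 z‖ ≤ ‖toLp 2 (B *ᵥ z)‖ * ‖toLp 2 z‖ := by
    rw [mul_assoc, ← sq, norm_toLp_sq, mul_comm ‖_‖]
    exact (h z).trans ((le_abs_self _).trans (abs_dotProduct_le_norm_mul_norm _ _))
  rcases (norm_nonneg (toLp 2 z)).eq_or_lt with h0 | hpos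
  · rw [← h0, mul_zero]
    exact norm_nonneg _
  · exact le_of_mul_le_mul_right hsq hpos

variable [DecidableEq ι]

lemma norm_toLp_mulVec_le (A : Matrix ι ι ℝ) (x : ι → ℝ) :
    ‖toLp 2 (A *ᵥ x)‖ ≤ opNorm A * ‖toLp 2 x‖ :=
  (toEuclideanCLM (𝕜 := ℝ) A).le_opNorm (toLp 2 x)

lemma abs_dotProduct_mulVec_le (A : Matrix ι ι ℝ) (x : ι → ℝ) :
    |x ⬝ᵥ A *ᵥ x| ≤ opNorm A * (x ⬝ᵥ x) :=
  calc |x ⬝ᵥ A *ᵥ x| ≤ ‖toLp 2 x‖ * ‖toLp 2 (A *ᵥ x)‖ := abs_dotProduct_le_norm_mul_norm _ _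
    _ ≤ ‖toLp 2 x‖ * (opNorm A * ‖toLp 2 x‖) := by gcongr; exact norm_toLp_mulVec_le A x
    _ = opNorm A * (x ⬝ᵥ x) := by rw [← norm_toLp_sq]; ring

lemma opNorm_pos_iff {A : Matrix ι ι ℝ} : 0 < opNorm A ↔ A ≠ 0 := by
  rw [opNorm, norm_pos_iff]
  simp

lemma opNorm_inv_pos [Nonempty ι] {A : Matrix ι ι ℝ} (hA : IsUnit A) : 0 < opNorm A⁻¹ :=
  opNorm_pos_iff.2 (isUnit_nonsing_inv_iff.2 hA).ne_zero

lemma isUnit_and_opNorm_inv_le {B : Matrix ι ι ℝ} {μ : ℝ} (hμ : 0 < μ)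
    (h : ∀ z, μ * (z ⬝ᵥ z) ≤ z ⬝ᵥ B *ᵥ z) : IsUnit B ∧ opNorm B⁻¹ ≤ μ⁻¹ := by
  have hB : IsUnit B := by
    rw [← mulVec_injective_iff_isUnit]
    intro x y hxy
    have := mul_norm_le_norm_mulVec h (x - y)
    rw [mulVec_sub, hxy, sub_self, toLp_zero, norm_zero] at this
    have h0 : ‖toLp 2 (x - y)‖ = 0 := by nlinarith [norm_nonneg (toLp 2 (x - y))]
    rwa [norm_eq_zero, toLp_eq_zero, sub_eq_zero] at h0
  refine ⟨hB, ContinuousLinearMap.opNorm_le_bound _ (inv_nonneg.2 hμ.le) fun v => ?_⟩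
  have := mul_norm_le_norm_mulVec h (B⁻¹ *ᵥ ofLp v)
  rw [mulVec_mulVec, mul_nonsing_inv _ ((isUnit_iff_isUnit_det B).1 hB), one_mulVec,
    toLp_ofLp] at this
  rwa [le_inv_mul_iff₀ hμ]

end Euclidean

namespace Matrix.PosSemidef

variable {ι : Type*} [Fintype ι] {A : Matrix ι ι ℝ}

lemma sq_dotProduct_mulVec_le (hA : A.PosSemidef) (x y : ι → ℝ) :
    (x ⬝ᵥ A *ᵥ y) ^ 2 ≤ (x ⬝ᵥ A *ᵥ x) * (y ⬝ᵥ A *ᵥ y) := by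
  have hsymm : y ⬝ᵥ A *ᵥ x = x ⬝ᵥ A *ᵥ y := by
    rw [dotProduct_mulVec, ← mulVec_transpose, (isHermitian_iff_isSymm.1 hA.1).eq, dotProduct_comm]
  have hquad : ∀ t : ℝ,
      0 ≤ (y ⬝ᵥ A *ᵥ y) * (t * t) + 2 * (x ⬝ᵥ A *ᵥ y) * t + x ⬝ᵥ A *ᵥ x := by
    intro t
    have := hA.dotProduct_mulVec_nonneg (x + t • y)
    simp only [star_trivial, mulVec_add, mulVec_smul, dotProduct_add, add_dotProduct,
      dotProduct_smul, smul_dotProduct, smul_eq_mul, hsymm] at this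
    linarith
  have := discrim_le_zero hquad
  rw [discrim] at this
  nlinarith

lemma dotProduct_self_le_opNorm_inv_mul [DecidableEq ι] (hA : A.PosSemidef) (hU : IsUnit A)
    (x : ι → ℝ) : x ⬝ᵥ x ≤ opNorm A⁻¹ * (x ⬝ᵥ A *ᵥ x) := by
  set y := A⁻¹ *ᵥ x
  have hAy : A *ᵥ y = x := by
    rw [mulVec_mulVec, mul_nonsing_inv _ ((isUnit_iff_isUnit_det A).1 hU), one_mulVec]
  have hcs := hA.sq_dotProduct_mulVec_le x y
  rw [hAy] at hcs
  have hy : y ⬝ᵥ x ≤ opNorm A⁻¹ * (x ⬝ᵥ x) := by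
    rw [dotProduct_comm]
    exact (le_abs_self _).trans (abs_dotProduct_mulVec_le A⁻¹ x)
  have hQx : 0 ≤ x ⬝ᵥ A *ᵥ x := by simpa using hA.dotProduct_mulVec_nonneg x
  have hbound : (x ⬝ᵥ x) * (x ⬝ᵥ x) ≤ opNorm A⁻¹ * (x ⬝ᵥ A *ᵥ x) * (x ⬝ᵥ x) := by
    nlinarith [mul_le_mul_of_nonneg_left hy hQx]
  rcases (real_dotProduct_self_nonneg x).eq_or_lt with h0 | hpos
  · rw [← h0]
    exact mul_nonneg (norm_nonneg _) hQx
  · exact le_of_mul_le_mul_right hbound hpos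

end Matrix.PosSemidef

section RayleighQuotient

variable {m : ℕ} (A : Matrix (Fin m) (Fin m) ℝ)

lemma minEig_eq : minEig A = ⨅ x : {x : Fin m → ℝ // x ⬝ᵥ x = 1}, x.1 ⬝ᵥ A *ᵥ x.1 :=
  (Equiv.subtypeEquivRight fun x => by simp only [dotProduct, sq]).iInf_congr fun x => by
    simp only [dotProduct, mulVec, Finset.mul_sum, mul_assoc]
    rfl

lemma bddBelow_range_dotProduct_mulVec :
    BddBelow (Set.range fun x : {x : Fin m → ℝ // x ⬝ᵥ x = 1} => x.1 ⬝ᵥ A *ᵥ x.1) := by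
  refine ⟨-opNorm A, ?_⟩
  rintro - ⟨⟨x, hx⟩, rfl⟩
  have := abs_dotProduct_mulVec_le A x
  rw [hx, mul_one] at this
  exact neg_le_of_abs_le this

lemma minEig_mul_dotProduct_le (x : Fin m → ℝ) : minEig A * (x ⬝ᵥ x) ≤ x ⬝ᵥ A *ᵥ x := by
  rcases (real_dotProduct_self_nonneg x).eq_or_lt with h0 | hpos
  · rw [← h0, dotProduct_self_eq_zero.1 h0.symm]
    simp
  set r := Real.sqrt (x ⬝ᵥ x)
  have hr : r ^ 2 = x ⬝ᵥ x := Real.sq_sqrt hpos.le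
  have hr0 : r ≠ 0 := (Real.sqrt_pos.2 hpos).ne'
  have hunit : r⁻¹ • x ⬝ᵥ r⁻¹ • x = 1 := by
    rw [dotProduct_smul, smul_dotProduct, ← hr, smul_eq_mul, smul_eq_mul]
    field_simp
  have hle := ciInf_le (bddBelow_range_dotProduct_mulVec A) ⟨r⁻¹ • x, hunit⟩
  simp only [← minEig_eq, mulVec_smul, dotProduct_smul, smul_dotProduct, smul_eq_mul] at hle
  rw [← hr]
  calc minEig A * r ^ 2 ≤ r⁻¹ * (r⁻¹ * x ⬝ᵥ A *ᵥ x) * r ^ 2 := by gcongr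
    _ = x ⬝ᵥ A *ᵥ x := by field_simp

lemma le_minEig_iff [NeZero m] {μ : ℝ} : μ ≤ minEig A ↔ ∀ x, μ * (x ⬝ᵥ x) ≤ x ⬝ᵥ A *ᵥ x := by
  refine ⟨fun h x => ?_, fun h => ?_⟩
  · exact (mul_le_mul_of_nonneg_right h (real_dotProduct_self_nonneg x)).trans
      (minEig_mul_dotProduct_le A x)
  · have : Nonempty {x : Fin m → ℝ // x ⬝ᵥ x = 1} := ⟨⟨Pi.single 0 1, by simp⟩⟩
    rw [minEig_eq]
    exact le_ciInf fun x => by simpa [x.2] using h x.1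

lemma inv_opNorm_inv_le_minEig [NeZero m] {A : Matrix (Fin m) (Fin m) ℝ} (hA : A.PosSemidef)
    (hU : IsUnit A) : (opNorm A⁻¹)⁻¹ ≤ minEig A :=
  (le_minEig_iff A).2 fun x => by
    rw [inv_mul_le_iff₀ (opNorm_inv_pos hU)]
    exact hA.dotProduct_self_le_opNorm_inv_mul hU x

end RayleighQuotient

section Gram

variable {D m : ℕ} (w : Fin m → Fin D → ℝ)

lemma gram_add_apply (n ñ : ℕ) (k l : Fin m) :
    gram w (n + ñ) k l = gram w n k l * ∑ f : Fin ñ → Fin D, ∏ j, w k (f j) * w l (f j) := by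
  simp only [gram, of_apply, pow_add, dot]
  rw [Fintype.sum_pow _ ñ]

lemma dotProduct_gram_add_mulVec (n ñ : ℕ) (y : Fin m → ℝ) :
    y ⬝ᵥ gram w (n + ñ) *ᵥ y = ∑ f : Fin ñ → Fin D,
      (fun k => y k * ∏ j, w k (f j)) ⬝ᵥ gram w n *ᵥ (fun k => y k * ∏ j, w k (f j)) := by
  have hentry : ∀ k l, y k * (gram w (n + ñ) k l * y l) = ∑ f : Fin ñ → Fin D,
      (y k * ∏ j, w k (f j)) * (gram w n k l * (y l * ∏ j, w l (f j))) := by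
    intro k l
    simp only [gram_add_apply, Finset.mul_sum, Finset.sum_mul]
    refine Finset.sum_congr rfl fun f _ => ?_
    rw [Finset.prod_mul_distrib]
    ring
  simp only [dotProduct, mulVec, Finset.mul_sum, hentry]
  exact (Finset.sum_congr rfl fun _ _ => Finset.sum_comm).trans Finset.sum_comm

lemma posSemidef_gram (n : ℕ) : (gram w n).PosSemidef := by
  refine .of_dotProduct_mulVec_nonneg ?_ fun y => ?_
  · refine IsHermitian.ext fun k l => ?_
    simp [gram, dot, mul_comm]
  · rw [star_trivial, ← zero_add n, dotProduct_gram_add_mulVec]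
    refine Finset.sum_nonneg fun f _ => ?_
    simp only [gram, pow_zero, of_apply, mulVec, dotProduct, one_mul, ← Finset.sum_mul]
    exact mul_self_nonneg _

variable {w}

lemma sum_prod_sq_eq_one (hw : ∀ k, ∑ i, (w k i) ^ 2 = 1) (ñ : ℕ) (k : Fin m) :
    ∑ f : Fin ñ → Fin D, (∏ j, w k (f j)) ^ 2 = 1 := by
  have := Fintype.sum_pow (fun i => w k i ^ 2) ñ
  rw [hw k, one_pow] at this
  simpa only [Finset.prod_pow] using this.symm

lemma minEig_gram_le_minEig_gram_add [NeZero m] (hw : ∀ k, ∑ i, (w k i) ^ 2 = 1) (n ñ : ℕ) :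
    minEig (gram w n) ≤ minEig (gram w (n + ñ)) := by
  refine (le_minEig_iff _).2 fun y => ?_
  have hnorm : ∑ f : Fin ñ → Fin D,
      (fun k => y k * ∏ j, w k (f j)) ⬝ᵥ (fun k => y k * ∏ j, w k (f j)) = y ⬝ᵥ y := by
    simp only [dotProduct, ← sq, mul_pow]
    rw [Finset.sum_comm]
    simp only [← Finset.mul_sum, sum_prod_sq_eq_one hw, mul_one]
  rw [dotProduct_gram_add_mulVec, ← hnorm, Finset.mul_sum]
  exact Finset.sum_le_sum fun f _ => minEig_mul_dotProduct_le _ _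

end Gram

/-- Higher order Hadamard products: for unit vectors `w_1, …, w_m`,
`λ_min(G_{2+ñ}) ≥ λ_min(G_2)` for every `ñ ≥ 0`; in particular if `G_2` is invertible with
`‖G_2⁻¹‖ ≤ c₃` then every `G_{2+ñ}` is invertible with `‖G_{2+ñ}⁻¹‖ ≤ c₃`. -/
theorem higher_order_hadamard_min_eigenvalue
    (D m : ℕ) (w : Fin m → Fin D → ℝ) (hw : ∀ k, ∑ i, (w k i) ^ 2 = 1) :
    (∀ nt : ℕ, minEig (gram w 2) ≤ minEig (gram w (2 + nt))) ∧
    (∀ c₃ : ℝ, IsUnit (gram w 2) → opNorm (gram w 2)⁻¹ ≤ c₃ →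
      ∀ nt : ℕ, IsUnit (gram w (2 + nt)) ∧ opNorm (gram w (2 + nt))⁻¹ ≤ c₃) := by
  rcases m.eq_zero_or_pos with rfl | hm
  · have hG : ∀ nt, gram w (2 + nt) = gram w 2 := fun _ => Subsingleton.elim _ _
    simp only [hG]
    exact ⟨fun _ => le_rfl, fun _ hU hc _ => ⟨hU, hc⟩⟩
  have : NeZero m := ⟨hm.ne'⟩
  have hmono := minEig_gram_le_minEig_gram_add hw 2
  refine ⟨hmono, fun c₃ hU hc nt => ?_⟩
  have hlow : (opNorm (gram w 2)⁻¹)⁻¹ ≤ minEig (gram w (2 + nt)) :=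
    (inv_opNorm_inv_le_minEig (posSemidef_gram w 2) hU).trans (hmono nt)
  have hpos : 0 < minEig (gram w (2 + nt)) := (inv_pos.2 (opNorm_inv_pos hU)).trans_le hlow
  obtain ⟨hU', hinv⟩ := isUnit_and_opNorm_inv_le hpos (minEig_mul_dotProduct_le _)
  exact ⟨hU', hinv.trans (((inv_le_comm₀ (opNorm_inv_pos hU) hpos).1 hlow).trans hc)⟩
end

section
/- There exists a constant C > 0 depending only on c₂ and c₃ such that the following holds. Let 2 ≤ D ≤ m and let w_1, …, w_m ∈ ℝ^D be unit vectors satisfying (A2) with constant c₂ and (A3) with constant c₃. If ŵ_1, …, ŵ_m ∈ ℝ^D are unit vectors with δ_max := max_{k∈[m]} min_{s∈{−1,1}} ‖s ŵ_k − w_k‖₂ ≤ D^{1/2}/(C m √(log m)), then the approximated weights satisfy (A2) with constant 2c₂, i.e. max_{k≠ℓ} ⟨ŵ_k, ŵ_ℓ⟩² ≤ 2c₂ log(m)/D. -/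
open scoped BigOperators

noncomputable def l2norm {d : ℕ} (v : Fin d → ℝ) : ℝ := Real.sqrt (∑ i, (v i) ^ 2)

/-!
If `ŵ_k = ±w_k + O(δ)` for unit vectors, then `|⟨ŵ_k, ŵ_ℓ⟩| ≤ |⟨w_k, w_ℓ⟩| + 2δ`, the signs
dropping out of the absolute value. With the constant `C = 10 / √c₂`, the hypothesis
`D ≤ m` and `log m ≥ log 2 > 1/2` give `δ ≤ √(c₂ log m / D) / 5`, and
`(1 + 2/5)² < 2` turns this into the bound `2 c₂ log m / D`.
-/

open Real
open scoped InnerProductSpace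

section SignedPerturbation

variable {E : Type*} [NormedAddCommGroup E] [InnerProductSpace ℝ E]

lemma abs_inner_sub_inner_le (a b x y : E) :
    |⟪a, b⟫_ℝ - ⟪x, y⟫_ℝ| ≤ ‖a - x‖ * ‖y‖ + ‖a‖ * ‖b - y‖ := by
  have hsplit : ⟪a, b⟫_ℝ - ⟪x, y⟫_ℝ = ⟪a - x, y⟫_ℝ + ⟪a, b - y⟫_ℝ := by
    simp only [inner_sub_left, inner_sub_right]; ring
  rw [hsplit]
  exact (abs_add_le _ _).trans
    (add_le_add (abs_real_inner_le_norm _ _) (abs_real_inner_le_norm _ _))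

lemma exists_abs_eq_one_norm_smul_sub_eq_min (u x : E) :
    ∃ s : ℝ, |s| = 1 ∧ ‖s • u - x‖ = min ‖u - x‖ ‖u + x‖ := by
  rcases min_choice ‖u - x‖ ‖u + x‖ with h | h
  · exact ⟨1, abs_one, by rw [h, one_smul]⟩
  · refine ⟨-1, by norm_num, ?_⟩
    rw [h, neg_one_smul, ← norm_neg]
    congr 1
    abel

lemma abs_inner_le_of_min_norm_le {u v x y : E} {δ : ℝ} (hu : ‖u‖ = 1) (hy : ‖y‖ = 1)
    (hux : min ‖u - x‖ ‖u + x‖ ≤ δ) (hvy : min ‖v - y‖ ‖v + y‖ ≤ δ) :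
    |⟪u, v⟫_ℝ| ≤ |⟪x, y⟫_ℝ| + 2 * δ := by
  obtain ⟨s, hs, hsu⟩ := exists_abs_eq_one_norm_smul_sub_eq_min u x
  obtain ⟨t, ht, htv⟩ := exists_abs_eq_one_norm_smul_sub_eq_min v y
  have hsign : |⟪s • u, t • v⟫_ℝ| = |⟪u, v⟫_ℝ| := by
    rw [real_inner_smul_left, real_inner_smul_right, abs_mul, abs_mul, hs, ht, one_mul, one_mul]
  have hperturb := abs_inner_sub_inner_le (s • u) (t • v) x y
  rw [norm_smul, Real.norm_eq_abs, hs, hu, hy, one_mul, mul_one, hsu, htv] at hperturb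
  linarith [abs_sub_abs_le_abs_sub ⟪s • u, t • v⟫_ℝ ⟪x, y⟫_ℝ]

end SignedPerturbation

lemma l2norm_eq_norm {d : ℕ} (v : Fin d → ℝ) :
    l2norm v = ‖(WithLp.toLp 2 v : EuclideanSpace ℝ (Fin d))‖ := by
  simp [l2norm, EuclideanSpace.norm_eq]

lemma dot_eq_inner {d : ℕ} (v w : Fin d → ℝ) :
    dot v w = ⟪(WithLp.toLp 2 v : EuclideanSpace ℝ (Fin d)), WithLp.toLp 2 w⟫_ℝ := by
  simp [dot, PiLp.inner_apply, mul_comm]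

lemma norm_toLp_eq_one {d : ℕ} {v : Fin d → ℝ} (hv : ∑ i, v i ^ 2 = 1) :
    ‖(WithLp.toLp 2 v : EuclideanSpace ℝ (Fin d))‖ = 1 := by
  rw [← l2norm_eq_norm, l2norm, hv, sqrt_one]

lemma abs_dot_le_of_min_l2norm_le {d : ℕ} {u v x y : Fin d → ℝ} {δ : ℝ}
    (hu : ∑ i, u i ^ 2 = 1) (hy : ∑ i, y i ^ 2 = 1)
    (hux : min (l2norm (u - x)) (l2norm (u + x)) ≤ δ)
    (hvy : min (l2norm (v - y)) (l2norm (v + y)) ≤ δ) :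
    |dot u v| ≤ |dot x y| + 2 * δ := by
  simp only [l2norm_eq_norm, WithLp.toLp_sub, WithLp.toLp_add] at hux hvy
  simp only [dot_eq_inner]
  exact abs_inner_le_of_min_norm_le (norm_toLp_eq_one hu) (norm_toLp_eq_one hy) hux hvy

lemma one_le_two_mul_log {m : ℝ} (hm : 2 ≤ m) : 1 ≤ 2 * log m := by
  have := Real.log_two_gt_d9
  have := Real.log_le_log (by norm_num) hm
  linarith

lemma sqrt_div_le_sqrt_mul_log_div_five {c D m : ℝ} (hc : 0 < c) (hD : 0 < D) (hDm : D ≤ m)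
    (hm : 2 ≤ m) :
    √D / (10 / √c * m * √(log m)) ≤ √(c * log m / D) / 5 := by
  have hL : 0 < log m := Real.log_pos (by linarith)
  have hsc : 0 < √c := sqrt_pos.mpr hc
  have hsD : 0 < √D := sqrt_pos.mpr hD
  have hsL : 0 < √(log m) := sqrt_pos.mpr hL
  rw [sqrt_div' _ hD.le, sqrt_mul hc.le, div_le_div_iff₀ (by positivity) (by norm_num)]
  calc √D * 5 = 5 * D / √D := by field_simp; rw [sq_sqrt hD.le]
    _ ≤ 10 * m * log m / √D := by
        gcongr ?_ / _
        nlinarith [one_le_two_mul_log hm]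
    _ = √c * √(log m) / √D * (10 / √c * m * √(log m)) := by
        field_simp; rw [sq_sqrt hL.le]

lemma sq_le_two_mul_sq_of_abs_le_add {x y a δ : ℝ} (hx : |x| ≤ a)
    (hδa : δ ≤ a / 5) (hy : |y| ≤ |x| + 2 * δ) : y ^ 2 ≤ 2 * a ^ 2 := by
  have hy' : |y| ≤ 7 / 5 * a := by linarith
  calc y ^ 2 = |y| ^ 2 := (sq_abs y).symm
    _ ≤ (7 / 5 * a) ^ 2 := pow_le_pow_left₀ (abs_nonneg y) hy' 2
    _ ≤ 2 * a ^ 2 := by nlinarith [sq_nonneg a]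

theorem approx_weights_incoherence_A2_general
    (c₂ c₃ : ℝ) (hc₂ : 0 < c₂) :
    ∃ C : ℝ, 0 < C ∧
      ∀ (D m : ℕ), 2 ≤ D → D ≤ m →
      ∀ (w wh : Fin m → Fin D → ℝ),
        (∀ k, ∑ i, (w k i) ^ 2 = 1) →
        (∀ k, ∑ i, (wh k i) ^ 2 = 1) →
        (∀ k l, k ≠ l → (dot (w k) (w l)) ^ 2 ≤ c₂ * Real.log m / D) →
        (∀ n : ℕ, 2 ≤ n → IsUnit (gram w n) ∧ opNorm (gram w n)⁻¹ ≤ c₃) →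
        (∀ k, min (l2norm (wh k - w k)) (l2norm (wh k + w k)) ≤
            Real.sqrt D / (C * m * Real.sqrt (Real.log m))) →
        ∀ k l, k ≠ l → (dot (wh k) (wh l)) ^ 2 ≤ 2 * c₂ * Real.log m / D := by
  refine ⟨10 / √c₂, by positivity, ?_⟩
  intro D m hD hDm w wh hw hwh hA2 _ hclose k l hkl
  have hDR : (2 : ℝ) ≤ D := by exact_mod_cast hD
  have hDmR : (D : ℝ) ≤ m := by exact_mod_cast hDm
  have hδ := sqrt_div_le_sqrt_mul_log_div_five hc₂ (by linarith) hDmR (hDR.trans hDmR)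
  have hx : |dot (w k) (w l)| ≤ √(c₂ * log m / D) := abs_le_sqrt (hA2 k l hkl)
  have hy := abs_dot_le_of_min_l2norm_le (hwh k) (hw l) (hclose k) (hclose l)
  calc dot (wh k) (wh l) ^ 2 ≤ 2 * √(c₂ * log m / D) ^ 2 :=
        sq_le_two_mul_sq_of_abs_le_add hx hδ hy
    _ = 2 * c₂ * log m / D := by
        rw [sq_sqrt (div_nonneg (mul_nonneg hc₂.le (log_nonneg (by linarith))) (by linarith))]
        ring

/-- Incoherence of approximated weights, part (A2): if the ground-truth unit weights satisfy
(A2) with constant `c₂` and (A3) with constant `c₃`, and the approximations are uniformly close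
up to signs, then the approximated weights satisfy (A2) with constant `2c₂`. -/
theorem approx_weights_incoherence_A2
    (c₂ c₃ : ℝ) (hc₂ : 0 < c₂) (hc₃ : 0 < c₃) :
    ∃ C : ℝ, 0 < C ∧
      ∀ (D m : ℕ), 2 ≤ D → D ≤ m →
      ∀ (w wh : Fin m → Fin D → ℝ),
        (∀ k, ∑ i, (w k i) ^ 2 = 1) →
        (∀ k, ∑ i, (wh k i) ^ 2 = 1) →
        (∀ k l, k ≠ l → (dot (w k) (w l)) ^ 2 ≤ c₂ * Real.log m / D) →
        (∀ n : ℕ, 2 ≤ n → IsUnit (gram w n) ∧ opNorm (gram w n)⁻¹ ≤ c₃) →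
        (∀ k, min (l2norm (wh k - w k)) (l2norm (wh k + w k)) ≤
            Real.sqrt D / (C * m * Real.sqrt (Real.log m))) →
        ∀ k l, k ≠ l → (dot (wh k) (wh l)) ^ 2 ≤ 2 * c₂ * Real.log m / D :=
  approx_weights_incoherence_A2_general c₂ c₃ hc₂
end

section
/- There exist a constant C > 0 depending only on c₂, c₃ and a threshold D₀ ∈ ℕ such that the following holds. Let m ≥ D ≥ D₀ with m (log m)² ≤ D², let w_1, …, w_m ∈ ℝ^D be unit vectors satisfying (A2) with constant c₂ and (A3) with constant c₃, and let ŵ_1, …, ŵ_m ∈ ℝ^D be unit vectors with δ_max := max_{k∈[m]} min_{s∈{−1,1}} ‖s ŵ_k − w_k‖₂ ≤ D^{1/2}/(C m √(log m)); for each k let s_k ∈ {−1,1} attain this minimum. Then for all k ≠ ℓ in [m], ⟨ŵ_k, s_ℓ w_ℓ⟩² ≤ 2c₂ log(m)/D. -/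
open scoped BigOperators

set_option maxHeartbeats 1000000 in
/-- Cross incoherence of approximated and true weights: with the ground-truth signs `s_k`
attaining the minimum, `⟨ŵ_k, s_ℓ w_ℓ⟩² ≤ 2c₂ log(m)/D` for all `k ≠ ℓ`. -/
theorem approx_true_cross_incoherence
    (c₂ c₃ : ℝ) (hc₂ : 0 < c₂) (hc₃ : 0 < c₃) :
    ∃ C : ℝ, 0 < C ∧ ∃ D₀ : ℕ,
      ∀ (D m : ℕ), D₀ ≤ D → D ≤ m → (m : ℝ) * (Real.log m) ^ 2 ≤ (D : ℝ) ^ 2 →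
      ∀ (w wh : Fin m → Fin D → ℝ) (s : Fin m → ℝ),
        (∀ k, ∑ i, (w k i) ^ 2 = 1) →
        (∀ k, ∑ i, (wh k i) ^ 2 = 1) →
        (∀ k l, k ≠ l → (dot (w k) (w l)) ^ 2 ≤ c₂ * Real.log m / D) →
        (∀ n : ℕ, 2 ≤ n → IsUnit (gram w n) ∧ opNorm (gram w n)⁻¹ ≤ c₃) →
        (∀ k, s k = 1 ∨ s k = -1) →
        (∀ k, l2norm (s k • wh k - w k) = min (l2norm (wh k - w k)) (l2norm (wh k + w k))) →
        (∀ k, min (l2norm (wh k - w k)) (l2norm (wh k + w k)) ≤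
            Real.sqrt D / (C * m * Real.sqrt (Real.log m))) →
        ∀ k l, k ≠ l → (dot (wh k) (s l • w l)) ^ 2 ≤ 2 * c₂ * Real.log m / D := by
  have hs2 : 0 < Real.sqrt c₂ := Real.sqrt_pos.2 hc₂
  have hsq : Real.sqrt c₂ * Real.sqrt c₂ = c₂ := Real.mul_self_sqrt hc₂.le
  set C : ℝ := max (4 / Real.sqrt c₂) (Real.sqrt (2 / c₂)) with hCdef
  have hCpos : 0 < C := lt_of_lt_of_le (by positivity) (le_max_left _ _)
  refine ⟨C, hCpos, 3, ?_⟩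
  intro D m hD hDm _hmL w wh s hw hwh hA2 _hA3 hsign hmin hδ k l hkl
  have hD3 : (3 : ℝ) ≤ (D : ℝ) := by exact_mod_cast hD
  have hmR : (3 : ℝ) ≤ (m : ℝ) := le_trans hD3 (by exact_mod_cast hDm)
  have hDmR : (D : ℝ) ≤ (m : ℝ) := by exact_mod_cast hDm
  have hm0 : (0 : ℝ) < m := by linarith
  have hD0 : (0 : ℝ) < D := by linarith
  have hL1 : 1 ≤ Real.log m := by
    have h3 : Real.exp 1 ≤ 3 := by nlinarith [Real.exp_one_lt_d9]
    exact (Real.le_log_iff_exp_le hm0).2 (by linarith)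
  set L := Real.log m with hLdef
  have hL0 : (0 : ℝ) < L := lt_of_lt_of_le one_pos hL1
  set A := c₂ * L / (D : ℝ) with hAdef
  have hA0 : 0 < A := by positivity
  set δ₀ := Real.sqrt D / (C * m * Real.sqrt L) with hδ₀def
  have hδ₀pos : 0 < δ₀ := by positivity
  -- error vector
  set e : Fin D → ℝ := fun i => s k * wh k i - w k i with hedef
  set E := ∑ i, e i ^ 2 with hEdef
  have hE0 : 0 ≤ E := Finset.sum_nonneg fun i _ => sq_nonneg _
  have hsqrtE : Real.sqrt E ≤ δ₀ := by
    have h1 := hmin k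
    have h2 := hδ k
    have : l2norm (s k • wh k - w k) ≤ δ₀ := by rw [h1]; exact h2
    have heq : l2norm (s k • wh k - w k) = Real.sqrt E := by
      unfold l2norm
      congr 1
    linarith [heq ▸ this]
  have hEδ : E ≤ δ₀ ^ 2 := by
    have h := pow_le_pow_left₀ (Real.sqrt_nonneg E) hsqrtE 2
    rwa [Real.sq_sqrt hE0] at h
  -- signs
  have hsk : s k * s k = 1 := by rcases hsign k with h | h <;> rw [h] <;> norm_num
  have hsl : s l * s l = 1 := by rcases hsign l with h | h <;> rw [h] <;> norm_num
  -- decomposition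
  set a := dot (w k) (w l) with hadef
  set b := ∑ i, e i * w l i with hbdef
  have hab : a + b = s k * dot (wh k) (w l) := by
    simp only [hadef, hbdef, dot, Finset.mul_sum, ← Finset.sum_add_distrib]
    refine Finset.sum_congr rfl fun i _ => ?_
    simp only [hedef]; ring
  have hdot1 : dot (wh k) (s l • w l) = s l * dot (wh k) (w l) := by
    simp only [dot, Pi.smul_apply, smul_eq_mul, Finset.mul_sum]
    exact Finset.sum_congr rfl fun i _ => by ring
  have hgoal_eq : (dot (wh k) (s l • w l)) ^ 2 = (a + b) ^ 2 := by
    rw [hdot1, hab]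
    have : (s l * dot (wh k) (w l)) ^ 2 = (s l * s l) * (dot (wh k) (w l)) ^ 2 := by ring
    rw [this, hsl, one_mul]
    have : (s k * dot (wh k) (w l)) ^ 2 = (s k * s k) * (dot (wh k) (w l)) ^ 2 := by ring
    rw [this, hsk, one_mul]
  -- Cauchy-Schwarz for b
  have hb2 : b ^ 2 ≤ δ₀ ^ 2 := by
    have hcs := Finset.sum_mul_sq_le_sq_mul_sq Finset.univ e (w l)
    rw [hw l, mul_one] at hcs
    calc b ^ 2 ≤ E := hcs
      _ ≤ δ₀ ^ 2 := hEδ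
  have hbabs : |b| ≤ δ₀ := by
    have h := Real.sqrt_le_sqrt hb2
    rwa [Real.sqrt_sq_eq_abs, Real.sqrt_sq hδ₀pos.le] at h
  -- bound on a
  have ha2 : a ^ 2 ≤ A := hA2 k l hkl
  have haabs : |a| ≤ Real.sqrt A := by
    have h := Real.sqrt_le_sqrt ha2
    rwa [Real.sqrt_sq_eq_abs] at h
  -- key numerical inequalities
  have hsL : 0 < Real.sqrt L := Real.sqrt_pos.2 hL0
  have hsD : 0 < Real.sqrt D := Real.sqrt_pos.2 hD0
  have hsqrtA : Real.sqrt A = Real.sqrt c₂ * Real.sqrt L / Real.sqrt D := by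
    rw [hAdef, Real.sqrt_div (by positivity), Real.sqrt_mul hc₂.le]
  have hsL2 : Real.sqrt L * Real.sqrt L = L := Real.mul_self_sqrt hL0.le
  have hsD2 : Real.sqrt D * Real.sqrt D = (D : ℝ) := Real.mul_self_sqrt hD0.le
  -- δ₀ * √A = √c₂ / (C * m)
  have hprod_eq : δ₀ * Real.sqrt A = Real.sqrt c₂ / (C * m) := by
    rw [hδ₀def, hsqrtA]
    field_simp
  have hC1 : 4 / Real.sqrt c₂ ≤ C := le_max_left _ _
  have hC2 : Real.sqrt (2 / c₂) ≤ C := le_max_right _ _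
  have hCc : 4 ≤ C * Real.sqrt c₂ := by
    rw [div_le_iff₀ hs2] at hC1; linarith
  have hmLD : (D : ℝ) ≤ m * L := by
    calc (D : ℝ) ≤ m := hDmR
      _ = m * 1 := (mul_one _).symm
      _ ≤ m * L := by exact mul_le_mul_of_nonneg_left hL1 hm0.le
  have key1 : δ₀ * Real.sqrt A ≤ A / 4 := by
    rw [hprod_eq]
    have h1 : 4 * (D : ℝ) ≤ (C * Real.sqrt c₂) * (m * L) :=
      mul_le_mul hCc hmLD hD0.le (by positivity)
    have h2 : Real.sqrt c₂ * (4 * (D : ℝ)) ≤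
        Real.sqrt c₂ * ((C * Real.sqrt c₂) * (m * L)) :=
      mul_le_mul_of_nonneg_left h1 hs2.le
    have h3 : Real.sqrt c₂ * ((C * Real.sqrt c₂) * (m * L)) = c₂ * L * (C * m) := by
      calc Real.sqrt c₂ * ((C * Real.sqrt c₂) * (m * L))
          = (Real.sqrt c₂ * Real.sqrt c₂) * (C * ((m : ℝ) * L)) := by ring
        _ = c₂ * (C * ((m : ℝ) * L)) := by rw [hsq]
        _ = c₂ * L * (C * m) := by ring
    rw [h3] at h2
    have h4 : Real.sqrt c₂ / (C * ↑m) ≤ c₂ * L / (4 * ↑D) := by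
      rw [div_le_div_iff₀ (by positivity) (by positivity)]
      linarith
    calc Real.sqrt c₂ / (C * ↑m) ≤ c₂ * L / (4 * ↑D) := h4
      _ = A / 4 := by rw [hAdef]; ring
  have key2 : δ₀ ^ 2 ≤ A / 2 := by
    have hδ₀sq : δ₀ ^ 2 = (D : ℝ) / (C ^ 2 * m ^ 2 * L) := by
      rw [hδ₀def, div_pow, mul_pow, mul_pow, Real.sq_sqrt hD0.le, Real.sq_sqrt hL0.le]
    have hAhalf : A / 2 = (c₂ * L) / (2 * D) := by rw [hAdef]; ring
    rw [hδ₀sq, hAhalf, div_le_div_iff₀ (by positivity) (by positivity)]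
    have hC2' : 2 / c₂ ≤ C ^ 2 := by
      have h := pow_le_pow_left₀ (Real.sqrt_nonneg (2 / c₂)) hC2 2
      rwa [Real.sq_sqrt (by positivity : (0:ℝ) ≤ 2 / c₂)] at h
    have h2c : 2 ≤ c₂ * C ^ 2 := by
      rw [div_le_iff₀ hc₂] at hC2'; linarith
    have hD2 : (D : ℝ) * (D : ℝ) ≤ (m * L) * (m * L) :=
      mul_le_mul hmLD hmLD hD0.le (by positivity)
    calc (D : ℝ) * (2 * (D : ℝ)) = 2 * ((D : ℝ) * (D : ℝ)) := by ring
      _ ≤ 2 * ((m * L) * (m * L)) := by linarith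
      _ ≤ (c₂ * C ^ 2) * ((m * L) * (m * L)) :=
          mul_le_mul_of_nonneg_right h2c (by positivity)
      _ = c₂ * L * (C ^ 2 * ↑m ^ 2 * L) := by ring
  -- combine
  have hab_le : a * b ≤ A / 4 := by
    calc a * b ≤ |a * b| := le_abs_self _
      _ = |a| * |b| := abs_mul _ _
      _ ≤ Real.sqrt A * δ₀ :=
          mul_le_mul haabs hbabs (abs_nonneg _) (Real.sqrt_nonneg _)
      _ = δ₀ * Real.sqrt A := mul_comm _ _
      _ ≤ A / 4 := key1
  have hb2A : b ^ 2 ≤ A / 2 := le_trans hb2 key2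
  have hexpand : (a + b) ^ 2 = a ^ 2 + 2 * (a * b) + b ^ 2 := by ring
  have hfinal : (a + b) ^ 2 ≤ 2 * A := by rw [hexpand]; linarith
  rw [hgoal_eq]
  calc (a + b) ^ 2 ≤ 2 * A := hfinal
    _ = 2 * c₂ * Real.log m / D := by rw [hAdef, hLdef]; ring
end

section
/- There exist a constant C > 0 depending only on c₂, c₃ and a threshold D₀ ∈ ℕ such that the following holds. Let m ≥ D ≥ D₀ with m (log m)² ≤ D², let w_1, …, w_m ∈ ℝ^D be unit vectors satisfying (A2) with constant c₂ and (A3) with constant c₃, and let ŵ_1, …, ŵ_m ∈ ℝ^D be unit vectors with δ_max := max_{k∈[m]} min_{s∈{−1,1}} ‖s ŵ_k − w_k‖₂ ≤ D^{1/2}/(C m √(log m)); for each k let s_k ∈ {−1,1} attain this minimum. Then for n ∈ {2,3} the matrix G̃_n ∈ ℝ^{m×m} with entries (G̃_n)_{ℓk} = ⟨ŵ_ℓ, s_k w_k⟩^n is invertible with ‖G̃_n^{−1}‖ ≤ 3c₃ in operator norm. -/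
open scoped BigOperators

/-!
Write `v_l = s_l ŵ_l`, so `‖v_l - w_l‖ ≤ δ = √D / (C m √(log m))`, and `A_{lk} = ⟨v_l, w_k⟩ⁿ`.
As `s_k² = 1`, the mixed Gram matrix is `S A S` for the signature matrix `S = diag(s_kⁿ)`, an
involutive contraction, so it suffices to invert `A = G_n + (A - G_n)`. Each entry of `A - G_n`
is `(a + b)ⁿ - aⁿ` with `a = ⟨w_l, w_k⟩` and `|b| ≤ δ`, and (A2) bounds the row sums of `a²` by
`1 + m c₂ log m / D`; for this `δ` the Frobenius norm, hence the operator norm, of `A - G_n` is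
`O((1 + c₂) / C) ≤ 2 / (3 c₃)`. A Neumann-series perturbation of `G_n`, with `‖G_n⁻¹‖ ≤ c₃` by
(A3), then gives `‖A⁻¹‖ ≤ 3 c₃`.
-/

theorem isUnit_add_and_norm_inverse_add_le {R : Type*} [NormedRing R] [HasSummableGeomSeries R]
    {x t : R} (hx : IsUnit x) {c r : ℝ} (hxc : ‖Ring.inverse x‖ ≤ c) (ht : c * ‖t‖ ≤ r)
    (hr : r < 1) : IsUnit (x + t) ∧ ‖Ring.inverse (x + t)‖ ≤ c / (1 - r) := by
  obtain ⟨u, rfl⟩ := hx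
  rw [Ring.inverse_unit] at hxc
  have hut : ‖(↑u⁻¹ : R)‖ * ‖t‖ ≤ r := (mul_le_mul_of_nonneg_right hxc (norm_nonneg t)).trans ht
  have hsmall : ‖-(↑u⁻¹ * t)‖ < 1 := by
    rw [norm_neg]; exact (norm_mul_le _ _).trans_lt (hut.trans_lt hr)
  set y : Rˣ := u * Units.oneSub _ hsmall
  have hy : (y : R) = u + t := by simp [y, mul_add, ← mul_assoc]
  refine ⟨hy ▸ y.isUnit, ?_⟩
  rw [← hy, Ring.inverse_unit]
  have hyinv : (↑y⁻¹ : R) = ↑u⁻¹ - ↑u⁻¹ * t * ↑y⁻¹ := by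
    calc (↑y⁻¹ : R) = ↑u⁻¹ * (↑u + t) * ↑y⁻¹ - ↑u⁻¹ * t * ↑y⁻¹ := by
          rw [mul_add, Units.inv_mul, add_mul, one_mul, add_sub_cancel_right]
      _ = ↑u⁻¹ - ↑u⁻¹ * t * ↑y⁻¹ := by rw [← hy, mul_assoc, Units.mul_inv, mul_one]
  have hbound : ‖(↑y⁻¹ : R)‖ ≤ c + r * ‖(↑y⁻¹ : R)‖ := by
    calc ‖(↑y⁻¹ : R)‖ = ‖↑u⁻¹ - ↑u⁻¹ * t * ↑y⁻¹‖ := congrArg norm hyinv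
      _ ≤ ‖(↑u⁻¹ : R)‖ + ‖(↑u⁻¹ : R)‖ * ‖t‖ * ‖(↑y⁻¹ : R)‖ :=
          (norm_sub_le _ _).trans (by gcongr; exact norm_mul₃_le)
      _ ≤ c + r * ‖(↑y⁻¹ : R)‖ := add_le_add hxc (mul_le_mul_of_nonneg_right hut (norm_nonneg _))
  rw [le_div_iff₀ (sub_pos.mpr hr)]
  linarith

theorem isUnit_conj_and_norm_inverse_conj_le {R : Type*} [NormedRing R] {u a : R}
    (hu : u * u = 1) (hu1 : ‖u‖ ≤ 1) (ha : IsUnit a) :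
    IsUnit (u * a * u) ∧ ‖Ring.inverse (u * a * u)‖ ≤ ‖Ring.inverse a‖ := by
  obtain ⟨v, rfl⟩ := ha
  let U : Rˣ := ⟨u, u, hu, hu⟩
  change IsUnit (↑(U * v * U) : R) ∧ ‖Ring.inverse (↑(U * v * U) : R)‖ ≤ _
  refine ⟨Units.isUnit _, ?_⟩
  rw [Ring.inverse_unit, Ring.inverse_unit, mul_inv_rev, mul_inv_rev, ← mul_assoc]
  calc ‖(↑(U⁻¹ * v⁻¹ * U⁻¹) : R)‖ ≤ ‖u‖ * ‖(↑v⁻¹ : R)‖ * ‖u‖ := norm_mul₃_le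
    _ ≤ 1 * ‖(↑v⁻¹ : R)‖ * 1 := by gcongr
    _ = ‖(↑v⁻¹ : R)‖ := by ring

section OpNorm

variable {ι : Type*} [Fintype ι] [DecidableEq ι]

open scoped Matrix.Norms.L2Operator

theorem opNorm_eq_l2_opNorm (A : Matrix ι ι ℝ) : opNorm A = ‖A‖ := rfl

theorem opNorm_le_sqrt_sum_sq (A : Matrix ι ι ℝ) : opNorm A ≤ √(∑ i, ∑ j, A i j ^ 2) := by
  refine ContinuousLinearMap.opNorm_le_bound _ (Real.sqrt_nonneg _) fun x => ?_
  rw [EuclideanSpace.norm_eq, EuclideanSpace.norm_eq, ← Real.sqrt_mul (by positivity)]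
  refine Real.sqrt_le_sqrt ?_
  rw [Finset.sum_mul]
  refine Finset.sum_le_sum fun i _ => ?_
  simpa [Matrix.ofLp_toEuclideanCLM, Matrix.mulVec, dotProduct] using
    Finset.sum_mul_sq_le_sq_mul_sq Finset.univ (A i) x

theorem isUnit_add_and_opNorm_inv_add_le {G E : Matrix ι ι ℝ} (hG : IsUnit G) {c r : ℝ}
    (hGc : opNorm G⁻¹ ≤ c) (hE : c * opNorm E ≤ r) (hr : r < 1) :
    IsUnit (G + E) ∧ opNorm (G + E)⁻¹ ≤ c / (1 - r) := by
  simp only [opNorm_eq_l2_opNorm, Matrix.nonsing_inv_eq_ringInverse] at hGc hE ⊢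
  exact isUnit_add_and_norm_inverse_add_le hG hGc hE hr

theorem isUnit_diagonal_conj_and_opNorm_inv_le {σ : ι → ℝ} (hσ : ∀ k, σ k ^ 2 = 1)
    {A : Matrix ι ι ℝ} (hA : IsUnit A) :
    IsUnit (Matrix.diagonal σ * A * Matrix.diagonal σ) ∧
      opNorm (Matrix.diagonal σ * A * Matrix.diagonal σ)⁻¹ ≤ opNorm A⁻¹ := by
  have hinvol : Matrix.diagonal σ * Matrix.diagonal σ = 1 := by
    rw [Matrix.diagonal_mul_diagonal, ← Matrix.diagonal_one]
    exact congrArg Matrix.diagonal (funext fun k => by rw [← sq, hσ k])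
  have hnorm : ‖Matrix.diagonal σ‖ ≤ 1 := by
    rw [Matrix.l2_opNorm_diagonal]
    refine pi_norm_le_iff_of_nonneg zero_le_one |>.mpr fun k => ?_
    rw [Real.norm_eq_abs, ← sq_le_one_iff_abs_le_one, hσ k]
  simp only [opNorm_eq_l2_opNorm, Matrix.nonsing_inv_eq_ringInverse]
  exact isUnit_conj_and_norm_inverse_conj_le hinvol hnorm hA

end OpNorm

section Dot

variable {d : ℕ}

theorem dot_smul_left (a : ℝ) (v w : Fin d → ℝ) : dot (a • v) w = a * dot v w :=
  smul_dotProduct a v w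

theorem dot_smul_right (a : ℝ) (v w : Fin d → ℝ) : dot v (a • w) = a * dot v w :=
  dotProduct_smul a v w

theorem dot_sub_left (u v w : Fin d → ℝ) : dot (u - v) w = dot u w - dot v w :=
  sub_dotProduct u v w

theorem abs_dot_le_l2norm_mul (v w : Fin d → ℝ) : |dot v w| ≤ l2norm v * l2norm w := by
  rw [l2norm, l2norm, ← Real.sqrt_mul (by positivity)]
  exact Real.abs_le_sqrt (Finset.sum_mul_sq_le_sq_mul_sq _ _ _)

end Dot

theorem sq_add_pow_sub_pow_le {n : ℕ} (hn : n = 2 ∨ n = 3) {a b d : ℝ} (ha : |a| ≤ 1)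
    (hb : |b| ≤ d) (hd : d ≤ 1) : ((a + b) ^ n - a ^ n) ^ 2 ≤ 18 * d ^ 2 * a ^ 2 + 72 * d ^ 4 := by
  have hd0 : 0 ≤ d := (abs_nonneg b).trans hb
  have hdiff : |(a + b) ^ n - a ^ n| ≤ 3 * d * |a| + 6 * d ^ 2 := by
    rcases hn with rfl | rfl
    · rw [show (a + b) ^ 2 - a ^ 2 = b * (2 * a + b) by ring, abs_mul]
      calc |b| * |2 * a + b| ≤ d * (2 * |a| + d) := by
            gcongr
            exact (abs_add_le _ _).trans (by rw [abs_mul, abs_two]; linarith)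
        _ ≤ 3 * d * |a| + 6 * d ^ 2 := by nlinarith [abs_nonneg a]
    · rw [show (a + b) ^ 3 - a ^ 3 = b * (3 * a ^ 2 + 3 * a * b + b ^ 2) by ring, abs_mul]
      have ha2 : a ^ 2 ≤ |a| := by nlinarith [sq_abs a, abs_nonneg a]
      have hb2 : b ^ 2 ≤ d := by nlinarith [sq_abs b, abs_nonneg b]
      have hcube : |3 * a ^ 2 + 3 * a * b + b ^ 2| ≤ 3 * a ^ 2 + 3 * |a * b| + b ^ 2 :=
        abs_le.mpr ⟨by nlinarith [neg_abs_le (a * b), sq_nonneg a, sq_nonneg b],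
          by nlinarith [le_abs_self (a * b)]⟩
      calc |b| * |3 * a ^ 2 + 3 * a * b + b ^ 2| ≤ d * (3 * |a| + 3 * d + d) := by
            gcongr
            refine hcube.trans ?_
            rw [abs_mul]
            nlinarith [abs_nonneg a, abs_nonneg b]
        _ ≤ 3 * d * |a| + 6 * d ^ 2 := by nlinarith [abs_nonneg a]
  calc ((a + b) ^ n - a ^ n) ^ 2 = |(a + b) ^ n - a ^ n| ^ 2 := (sq_abs _).symm
    _ ≤ (3 * d * |a| + 6 * d ^ 2) ^ 2 := by gcongr
    _ ≤ 18 * d ^ 2 * a ^ 2 + 72 * d ^ 4 := by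
        nlinarith [sq_abs a, sq_nonneg (3 * d * |a| - 6 * d ^ 2)]

section Gram

variable {D m : ℕ} {w : Fin m → Fin D → ℝ}

theorem l2norm_eq_one (hw : ∀ k, ∑ i, w k i ^ 2 = 1) (k : Fin m) : l2norm (w k) = 1 := by
  rw [l2norm, hw k, Real.sqrt_one]

theorem sum_sq_dot_le (hw : ∀ k, ∑ i, w k i ^ 2 = 1) {ρ : ℝ} (hρ : 0 ≤ ρ)
    (hoff : ∀ k l, k ≠ l → dot (w k) (w l) ^ 2 ≤ ρ) (l : Fin m) :
    ∑ k, dot (w l) (w k) ^ 2 ≤ 1 + m * ρ := by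
  have hterm : ∀ k, dot (w l) (w k) ^ 2 ≤ (if l = k then 1 else 0) + ρ := by
    intro k
    split_ifs with hlk
    · subst hlk
      have hdiag : dot (w l) (w l) = 1 := by simpa only [dot, ← sq] using hw l
      rw [hdiag]; linarith
    · linarith [hoff l k hlk]
  calc ∑ k, dot (w l) (w k) ^ 2 ≤ ∑ k, ((if l = k then 1 else 0) + ρ) :=
        Finset.sum_le_sum fun k _ => hterm k
    _ = 1 + m * ρ := by simp [Finset.sum_add_distrib]

theorem sum_sq_pow_dot_sub_pow_dot_le {n : ℕ} (hn : n = 2 ∨ n = 3) (v : Fin m → Fin D → ℝ)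
    (hw : ∀ k, ∑ i, w k i ^ 2 = 1) {ρ δ : ℝ} (hρ : 0 ≤ ρ)
    (hoff : ∀ k l, k ≠ l → dot (w k) (w l) ^ 2 ≤ ρ) (hδ : δ ≤ 1)
    (hv : ∀ l, l2norm (v l - w l) ≤ δ) :
    ∑ l, ∑ k, (dot (v l) (w k) ^ n - dot (w l) (w k) ^ n) ^ 2 ≤
      18 * m * δ ^ 2 * (1 + m * ρ) + 72 * m ^ 2 * δ ^ 4 := by
  have hentry : ∀ l k, (dot (v l) (w k) ^ n - dot (w l) (w k) ^ n) ^ 2 ≤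
      18 * δ ^ 2 * dot (w l) (w k) ^ 2 + 72 * δ ^ 4 := by
    intro l k
    rw [← add_sub_cancel (dot (w l) (w k)) (dot (v l) (w k)), ← dot_sub_left]
    refine sq_add_pow_sub_pow_le hn ?_ ?_ hδ
    · simpa [l2norm_eq_one hw] using abs_dot_le_l2norm_mul (w l) (w k)
    · calc |dot (v l - w l) (w k)| ≤ l2norm (v l - w l) * l2norm (w k) :=
            abs_dot_le_l2norm_mul _ _
        _ ≤ δ := by rw [l2norm_eq_one hw, mul_one]; exact hv l
  calc ∑ l, ∑ k, (dot (v l) (w k) ^ n - dot (w l) (w k) ^ n) ^ 2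
      ≤ ∑ l, ∑ k, (18 * δ ^ 2 * dot (w l) (w k) ^ 2 + 72 * δ ^ 4) := by
        gcongr with l _ k _; exact hentry l k
    _ = ∑ l, (18 * δ ^ 2 * ∑ k, dot (w l) (w k) ^ 2 + 72 * m * δ ^ 4) := by
        refine Finset.sum_congr rfl fun l _ => ?_
        rw [Finset.sum_add_distrib, ← Finset.mul_sum, Finset.sum_const, Finset.card_univ,
          Fintype.card_fin, nsmul_eq_mul]
        ring
    _ ≤ ∑ _l : Fin m, (18 * δ ^ 2 * (1 + m * ρ) + 72 * m * δ ^ 4) := by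
        gcongr with l _; exact sum_sq_dot_le hw hρ hoff l
    _ = 18 * m * δ ^ 2 * (1 + m * ρ) + 72 * m ^ 2 * δ ^ 4 := by
        rw [Finset.sum_const, Finset.card_univ, Fintype.card_fin, nsmul_eq_mul]; ring

theorem mixed_gram_eq_diagonal_conj {n : ℕ} (wh : Fin m → Fin D → ℝ) {s : Fin m → ℝ}
    (hs : ∀ k, s k ^ 2 = 1) :
    (Matrix.of fun l k => dot (wh l) (s k • w k) ^ n) =
      Matrix.diagonal (fun k => s k ^ n) * (Matrix.of fun l k => dot (s l • wh l) (w k) ^ n) *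
        Matrix.diagonal (fun k => s k ^ n) := by
  ext l k
  have hsl : s l ^ n * s l ^ n = 1 := by rw [← mul_pow, ← sq, hs l, one_pow]
  simp only [Matrix.mul_diagonal, Matrix.diagonal_mul, Matrix.of_apply, dot_smul_left,
    dot_smul_right, mul_pow]
  linear_combination -(s k ^ n * dot (wh l) (w k) ^ n) * hsl

end Gram

theorem one_le_log_of_three_le {x : ℝ} (hx : 3 ≤ x) : 1 ≤ Real.log x := by
  rw [Real.le_log_iff_exp_le (by linarith)]
  linarith [Real.exp_one_lt_d9]

noncomputable def errorRadius (C : ℝ) (D m : ℕ) : ℝ := √D / (C * m * √(Real.log m))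

section ErrorRadius

variable {C : ℝ} {D m : ℕ}

theorem errorRadius_le_one (hC : 1 ≤ C) (hD : 3 ≤ D) (hDm : D ≤ m) : errorRadius C D m ≤ 1 := by
  have hm : (3 : ℝ) ≤ m := by exact_mod_cast hD.trans hDm
  have hsqrtD : √(D : ℝ) ≤ m :=
    (Real.sqrt_le_self_iff.mpr (Or.inr (by exact_mod_cast hD.trans' (by norm_num)))).trans
      (by exact_mod_cast hDm)
  have hsqrtL : 1 ≤ √(Real.log m) := Real.one_le_sqrt.mpr (one_le_log_of_three_le hm)
  rw [errorRadius, div_le_one (by positivity)]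
  calc √(D : ℝ) ≤ 1 * m * 1 := by simpa using hsqrtD
    _ ≤ C * m * √(Real.log m) := by gcongr

theorem frobenius_budget_errorRadius_le {c₂ : ℝ} (hc₂ : 0 ≤ c₂) (hC : 1 ≤ C) (hD : 3 ≤ D)
    (hDm : D ≤ m) :
    18 * m * errorRadius C D m ^ 2 * (1 + m * (c₂ * Real.log m / D)) +
      72 * m ^ 2 * errorRadius C D m ^ 4 ≤ (10 * (1 + c₂) / C) ^ 2 := by
  have hD' : (0 : ℝ) < D := by exact_mod_cast hD.trans_lt' (by norm_num)
  have hm : (3 : ℝ) ≤ m := by exact_mod_cast hD.trans hDm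
  have hL := one_le_log_of_three_le hm
  set P := m * errorRadius C D m ^ 2 with hP
  have hPeq : P = D / (C ^ 2 * m * Real.log m) := by
    rw [hP, errorRadius, div_pow, mul_pow, mul_pow, Real.sq_sqrt hD'.le,
      Real.sq_sqrt (by linarith)]
    field_simp
  have hP0 : 0 ≤ P := by positivity
  have hP1 : P ≤ 1 / C ^ 2 := by
    rw [hPeq, div_le_div_iff₀ (by positivity) (by positivity), one_mul]
    have : (D : ℝ) ≤ m * Real.log m := by nlinarith [(Nat.cast_le (α := ℝ)).mpr hDm]
    nlinarith
  have hcross : P * (m * (c₂ * Real.log m / D)) = c₂ / C ^ 2 := by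
    rw [hPeq]; field_simp
  have hC2 : 1 / C ^ 2 ≤ 1 := by rw [div_le_one (by positivity)]; nlinarith
  calc 18 * m * errorRadius C D m ^ 2 * (1 + m * (c₂ * Real.log m / D)) +
        72 * m ^ 2 * errorRadius C D m ^ 4
      = 18 * P + 18 * (P * (m * (c₂ * Real.log m / D))) + 72 * P ^ 2 := by rw [hP]; ring
    _ ≤ 18 * (1 / C ^ 2) + 18 * (c₂ / C ^ 2) + 72 * (1 / C ^ 2) := by
        rw [hcross]; nlinarith
    _ = (90 + 18 * c₂) / C ^ 2 := by ring
    _ ≤ (10 * (1 + c₂) / C) ^ 2 := by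
        rw [div_pow]; gcongr; nlinarith

end ErrorRadius

/-- For `n ∈ {2,3}` the mixed Gram matrix `(G̃_n)_{ℓk} = ⟨ŵ_ℓ, s_k w_k⟩^n` is invertible
with `‖G̃_n⁻¹‖ ≤ 3c₃`. -/
theorem mixed_gram_invertible
    (c₂ c₃ : ℝ) (hc₂ : 0 < c₂) (hc₃ : 0 < c₃) :
    ∃ C : ℝ, 0 < C ∧ ∃ D₀ : ℕ,
      ∀ (D m : ℕ), D₀ ≤ D → D ≤ m → (m : ℝ) * (Real.log m) ^ 2 ≤ (D : ℝ) ^ 2 →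
      ∀ (w wh : Fin m → Fin D → ℝ) (s : Fin m → ℝ),
        (∀ k, ∑ i, (w k i) ^ 2 = 1) →
        (∀ k, ∑ i, (wh k i) ^ 2 = 1) →
        (∀ k l, k ≠ l → (dot (w k) (w l)) ^ 2 ≤ c₂ * Real.log m / D) →
        (∀ n : ℕ, 2 ≤ n → IsUnit (gram w n) ∧ opNorm (gram w n)⁻¹ ≤ c₃) →
        (∀ k, s k = 1 ∨ s k = -1) →
        (∀ k, l2norm (s k • wh k - w k) = min (l2norm (wh k - w k)) (l2norm (wh k + w k))) →
        (∀ k, min (l2norm (wh k - w k)) (l2norm (wh k + w k)) ≤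
            Real.sqrt D / (C * m * Real.sqrt (Real.log m))) →
        ∀ n : ℕ, n = 2 ∨ n = 3 →
          IsUnit (Matrix.of fun l k => (dot (wh l) (s k • w k)) ^ n) ∧
          opNorm (Matrix.of fun l k => (dot (wh l) (s k • w k)) ^ n)⁻¹ ≤ 3 * c₃ := by
  refine ⟨15 * (1 + c₂) * (1 + c₃), by positivity, 3, ?_⟩
  intro D m hD hDm _ w wh s hw _ hoff hgram hs hsign hδ n hn
  set C := 15 * (1 + c₂) * (1 + c₃)
  have hC : 1 ≤ C := by nlinarith [mul_pos hc₂ hc₃]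
  set A := Matrix.of fun l k => dot (s l • wh l) (w k) ^ n
  have hE : opNorm (A - gram w n) ≤ 10 * (1 + c₂) / C := by
    refine (opNorm_le_sqrt_sum_sq _).trans ((Real.sqrt_le_left (by positivity)).mpr ?_)
    exact (sum_sq_pow_dot_sub_pow_dot_le hn _ hw (by positivity) hoff
      (errorRadius_le_one hC hD hDm) fun l => (hsign l).trans_le (hδ l)).trans
      (frobenius_budget_errorRadius_le hc₂.le hC hD hDm)
  have hsmall : c₃ * opNorm (A - gram w n) ≤ 2 / 3 := by
    calc c₃ * opNorm (A - gram w n) ≤ c₃ * (10 * (1 + c₂) / C) := by gcongr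
      _ = 2 / 3 * (c₃ / (1 + c₃)) := by field_simp; ring
      _ ≤ 2 / 3 :=
          mul_le_of_le_one_right (by norm_num) ((div_le_one (by positivity)).mpr (by linarith))
  obtain ⟨hGunit, hGinv⟩ := hgram n (by omega)
  obtain ⟨hAunit, hAinv⟩ := isUnit_add_and_opNorm_inv_add_le hGunit hGinv hsmall (by norm_num)
  rw [add_sub_cancel] at hAunit hAinv
  have hs2 : ∀ k, s k ^ 2 = 1 := fun k => by rcases hs k with h | h <;> simp [h]
  have hsn : ∀ k, (s k ^ n) ^ 2 = 1 := fun k => by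
    rw [← pow_mul, mul_comm, pow_mul, hs2 k, one_pow]
  rw [mixed_gram_eq_diagonal_conj wh hs2]
  obtain ⟨hunit, hinv⟩ := isUnit_diagonal_conj_and_opNorm_inv_le hsn hAunit
  exact ⟨hunit, hinv.trans (hAinv.trans_eq (by ring))⟩
end

section
/- For every fixed R ≥ 2 there exists a constant C > 0 depending only on g, τ∞, c₂ and R such that the following holds. Let 2 ≤ D ≤ m with m log(m) ≥ D, let g : ℝ → ℝ satisfy (M1) and (M2), let w_1, …, w_m and ŵ_1, …, ŵ_m be unit vectors in ℝ^D with max_{k≠ℓ} ⟨w_k, w_ℓ⟩² ≤ c₂ log(m)/D, max_{k≠ℓ} ⟨ŵ_k, ŵ_ℓ⟩² ≤ c₂ log(m)/D and max_{k≠ℓ} ⟨ŵ_k, w_ℓ⟩² ≤ c₂ log(m)/D, and let τ_1, …, τ_m, τ̂_1, …, τ̂_m ∈ [−τ∞, τ∞]. Then Σ_{r=2}^R 2^r Σ_{ℓ=1}^m S_{r,ℓ}² ≤ (C m log(m)/D) · ( Δ_{W,F}² + (log(m)/D)^{1/2} Δ_{W,O} ). -/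
/-!
Since `g'` is bounded, `g` grows at most linearly, so the Hermite coefficients of the shifts
`g_τ`, `g'_τ` with `|τ| ≤ τ∞` are bounded by constants depending only on `r`, `g` and `τ∞`.
For fixed `r ≥ 2`, `S_{r,ℓ} = μ_r(g'_{τ̂_ℓ}) ⟨T, ŵ_ℓ^{⊗r}⟩` with
`T = Σ_k μ_r(g_{τ_k}) (ŵ_k^{⊗r} - w_k^{⊗r})`. The tensors `ŵ_ℓ^{⊗r}` are unit vectors whose
pairwise inner products are at most `ε = c₂ log m / D`, so a Bessel inequality for almost
orthogonal families gives `Σ_ℓ ⟨T, ŵ_ℓ^{⊗r}⟩² ≤ (1 + m ε) ‖T‖²`. Finally telescope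
`ŵ_k^{⊗r} - w_k^{⊗r}` into `r` tensors, each with a single factor `ŵ_k - w_k`. Since `r ≥ 2`,
for `k ≠ k'` the inner product of two such tensors has another slot contributing
`⟨ŵ_k, ŵ_{k'}⟩` or `⟨w_k, w_{k'}⟩`, so it is at most `√ε |⟨ŵ_k - w_k, ŵ_{k'} - w_{k'}⟩|`;
hence `‖T‖² ≤ r² max_k μ_r(g_{τ_k})² (Δ_{W,F}² + √ε Δ_{W,O})`.
-/

open scoped BigOperators
open MeasureTheory ProbabilityTheory

noncomputable def hermitePoly (r : ℕ) (y : ℝ) : ℝ :=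
  (1 / Real.sqrt (Nat.factorial r)) * (-1 : ℝ) ^ r * Real.exp (y ^ 2 / 2) *
    iteratedDeriv r (fun t => Real.exp (-(t ^ 2) / 2)) y

noncomputable def hermiteCoeff (h : ℝ → ℝ) (r : ℕ) : ℝ :=
  ∫ y, h y * hermitePoly r y ∂(gaussianReal 0 1)

/-- Assumption (M1). -/
def CondM1 (g : ℝ → ℝ) (ti : ℝ) : Prop :=
  ContDiff ℝ 3 g ∧
  (∀ n ∈ Finset.Icc 1 3, ∃ B : ℝ, ∀ t, |iteratedDeriv n g t| ≤ B) ∧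
  (StrictMonoOn (iteratedDeriv 2 g) (Set.Ioo (-ti) ti) ∨
    StrictAntiOn (iteratedDeriv 2 g) (Set.Ioo (-ti) ti)) ∧
  ((∀ t ∈ Set.Ioo (-ti) ti, 0 < deriv g t) ∨ (∀ t ∈ Set.Ioo (-ti) ti, deriv g t < 0)) ∧
  ∃ s : ℝ, (s = 1 ∨ s = -1) ∧ ∀ τ ∈ Set.Icc (-ti) ti,
    s = Real.sign (∫ t, deriv g (t + τ) * Real.exp (-(t ^ 2) / 2))

/-- Assumption (M2). -/
def CondM2 (g : ℝ → ℝ) : Prop :=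
  (¬ ∃ p : Polynomial ℝ, p.degree ≤ 3 ∧ ∀ t, deriv g t = Polynomial.eval t p) ∧
  Integrable (fun t => (g t) ^ 2 * Real.exp (-(t ^ 2) / 2))

/-- `S_{r,ℓ} = Σ_k μ_r(g_{τ_k}) μ_r(g'_{τ̂_ℓ}) (⟨ŵ_k, ŵ_ℓ⟩^r − ⟨w_k, ŵ_ℓ⟩^r)`. -/
noncomputable def Sterm {D m : ℕ} (g : ℝ → ℝ) (w wh : Fin m → Fin D → ℝ)
    (τ τh : Fin m → ℝ) (r : ℕ) (l : Fin m) : ℝ :=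
  ∑ k, hermiteCoeff (fun t => g (t + τ k)) r *
    hermiteCoeff (fun t => deriv g (t + τh l)) r *
    ((dot (wh k) (wh l)) ^ r - (dot (w k) (wh l)) ^ r)

/-- `Δ_{W,F}² = ‖Ŵ − W‖_F²`. -/
noncomputable def deltaF2 {D m : ℕ} (w wh : Fin m → Fin D → ℝ) : ℝ :=
  ∑ k, ∑ i, (wh k i - w k i) ^ 2

/-- `Δ_{W,O} = Σ_{k≠k'} |⟨ŵ_k − w_k, ŵ_{k'} − w_{k'}⟩|`. -/
noncomputable def deltaO {D m : ℕ} (w wh : Fin m → Fin D → ℝ) : ℝ :=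
  ∑ k, ∑ k', if k = k' then 0 else |dot (wh k - w k) (wh k' - w k')|



open Finset Polynomial
open scoped RealInnerProductSpace

lemma integrable_eval_gaussianReal (p : ℝ[X]) (μ : ℝ) (v : NNReal) :
    Integrable (fun y => p.eval y) (gaussianReal μ v) := by
  simp_rw [eval_eq_sum_range]
  refine integrable_finsetSum _ fun i _ => Integrable.const_mul ?_ _
  exact ((memLp_id_gaussianReal i).integrable_norm_pow').mono' (by fun_prop)
    (ae_of_all _ fun y => by simp [norm_pow])

lemma exists_iteratedDeriv_exp_neg_sq_half_eq (r : ℕ) : ∃ q : ℝ[X],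
    iteratedDeriv r (fun t => Real.exp (-(t ^ 2) / 2)) =
      fun y => q.eval y * Real.exp (-(y ^ 2) / 2) := by
  induction r with
  | zero => exact ⟨1, by simp⟩
  | succ n ih =>
    obtain ⟨q, hq⟩ := ih
    refine ⟨derivative q - X * q, funext fun y => ?_⟩
    have hexponent : HasDerivAt (fun y : ℝ => -(y ^ 2) / 2) (-y) y :=
      (((hasDerivAt_pow 2 y).neg).div_const 2).congr_deriv (by simp; ring)
    have hprod := (q.hasDerivAt y).mul hexponent.exp
    rw [iteratedDeriv_succ, hq, hprod.deriv (f := fun y => q.eval y * Real.exp (-(y ^ 2) / 2))]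
    simp only [eval_sub, eval_mul, eval_X]
    ring

lemma exists_hermitePoly_eq_eval (r : ℕ) : ∃ q : ℝ[X], hermitePoly r = fun y => q.eval y := by
  obtain ⟨q, hq⟩ := exists_iteratedDeriv_exp_neg_sq_half_eq r
  refine ⟨C (1 / Real.sqrt r.factorial * (-1) ^ r) * q, funext fun y => ?_⟩
  have hexp : Real.exp (y ^ 2 / 2) * Real.exp (-(y ^ 2) / 2) = 1 := by
    rw [← Real.exp_add, ← Real.exp_zero]; ring_nf
  rw [hermitePoly, hq, eval_mul, eval_C, ← mul_one (_ * q.eval y), ← hexp]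
  ring

lemma exists_abs_hermiteCoeff_le (r : ℕ) (a b : ℝ) :
    ∃ B, ∀ h : ℝ → ℝ, (∀ y, |h y| ≤ a + b * |y|) → |hermiteCoeff h r| ≤ B := by
  obtain ⟨q, hq⟩ := exists_hermitePoly_eq_eval r
  have hdom : Integrable (fun y => a * |q.eval y| + b * |(X * q).eval y|) (gaussianReal 0 1) :=
    ((integrable_eval_gaussianReal q 0 1).abs.const_mul a).add
      ((integrable_eval_gaussianReal (X * q) 0 1).abs.const_mul b)
  refine ⟨∫ y, a * |q.eval y| + b * |(X * q).eval y| ∂gaussianReal 0 1, fun h hh => ?_⟩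
  refine (Real.norm_eq_abs _).symm.trans_le <|
    norm_integral_le_of_norm_le hdom (ae_of_all _ fun y => ?_)
  have hy : (a + b * |y|) * |q.eval y| = a * |q.eval y| + b * |(X * q).eval y| := by
    rw [eval_mul, eval_X, abs_mul]; ring
  rw [hq, Real.norm_eq_abs, abs_mul, ← hy]
  exact mul_le_mul_of_nonneg_right (hh y) (abs_nonneg _)

section AlmostOrthogonal

variable {E : Type*} [NormedAddCommGroup E] [InnerProductSpace ℝ E] {ι : Type*} [Fintype ι]

lemma norm_sum_smul_sq_le (μ : ι → ℝ) (y : ι → E) :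
    ‖∑ k, μ k • y k‖ ^ 2 ≤ ∑ k, ∑ k', |μ k| * |μ k'| * |⟪y k, y k'⟫| := by
  rw [← real_inner_self_eq_norm_sq, sum_inner]
  refine sum_le_sum fun k _ => ?_
  rw [inner_sum]
  refine sum_le_sum fun k' _ => ?_
  rw [real_inner_smul_left, real_inner_smul_right, ← mul_assoc, ← abs_mul, ← abs_mul]
  exact le_abs_self _

lemma norm_sum_smul_sq_le_of_abs_le {μ : ι → ℝ} {B : ℝ} (hμ : ∀ k, |μ k| ≤ B) (y : ι → E) :
    ‖∑ k, μ k • y k‖ ^ 2 ≤ B ^ 2 * ∑ k, ∑ k', |⟪y k, y k'⟫| := by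
  refine (norm_sum_smul_sq_le μ y).trans ?_
  simp_rw [mul_sum]
  refine sum_le_sum fun k _ => sum_le_sum fun k' _ => ?_
  have hB : 0 ≤ B := (abs_nonneg _).trans (hμ k)
  rw [sq]
  gcongr
  · exact hμ k
  · exact hμ k'

lemma sum_inner_sq_le_of_abs_inner_le {x : ι → E} {ε : ℝ} (hε : 0 ≤ ε)
    (hnorm : ∀ l, ‖x l‖ ≤ 1) (hinner : ∀ l l', l ≠ l' → |⟪x l, x l'⟫| ≤ ε) (T : E) :
    ∑ l, ⟪T, x l⟫ ^ 2 ≤ (1 + Fintype.card ι * ε) * ‖T‖ ^ 2 := by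
  classical
  set β : ι → ℝ := fun l => ⟪T, x l⟫
  set s := ∑ l, β l ^ 2
  have hs : s = ⟪T, ∑ l, β l • x l⟫ := by
    simp_rw [inner_sum, real_inner_smul_right, s, sq]
    rfl
  have hgram : ∀ l l', |⟪x l, x l'⟫| ≤ (if l = l' then 1 else 0) + ε := by
    intro l l'
    split_ifs with h
    · subst h
      rw [real_inner_self_eq_norm_sq, abs_sq]
      nlinarith [hnorm l, norm_nonneg (x l)]
    · simpa using hinner l l' h
  have hZ : ‖∑ l, β l • x l‖ ^ 2 ≤ (1 + Fintype.card ι * ε) * s := by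
    refine (norm_sum_smul_sq_le β x).trans ?_
    calc ∑ l, ∑ l', |β l| * |β l'| * |⟪x l, x l'⟫|
        ≤ ∑ l, ∑ l', |β l| * |β l'| * ((if l = l' then 1 else 0) + ε) := by
          gcongr with l _ l' _; exact hgram l l'
      _ = s + (∑ l, |β l|) ^ 2 * ε := by
          simp_rw [mul_add, sum_add_distrib, mul_ite, mul_one, mul_zero, sum_ite_eq,
            mem_univ, if_true, ← sq, sq_abs, sq (∑ l, |β l|), sum_mul_sum, sum_mul]
          rfl
      _ ≤ s + (Fintype.card ι * s) * ε := by
          gcongr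
          simpa using sq_sum_le_card_mul_sum_sq (s := univ) (f := fun l => |β l|)
      _ = (1 + Fintype.card ι * ε) * s := by ring
  have hs2 : s ^ 2 ≤ ‖T‖ ^ 2 * ((1 + Fintype.card ι * ε) * s) := by
    calc s ^ 2 = ⟪T, ∑ l, β l • x l⟫ ^ 2 := by rw [hs]
      _ ≤ (‖T‖ * ‖∑ l, β l • x l‖) ^ 2 := by
          rw [← sq_abs]; gcongr; exact abs_real_inner_le_norm _ _
      _ ≤ ‖T‖ ^ 2 * ((1 + Fintype.card ι * ε) * s) := by rw [mul_pow]; gcongr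
  have hs0 : 0 ≤ s := sum_nonneg fun l _ => sq_nonneg _
  rcases hs0.eq_or_lt with h0 | hpos
  · rw [← h0]; positivity
  · nlinarith

end AlmostOrthogonal

lemma prod_sub_prod_eq_sum {κ R : Type*} [Fintype κ] [LinearOrder κ] [CommRing R]
    (a b : κ → R) :
    ∏ i, a i - ∏ i, b i = ∑ j, ∏ i, if i < j then a i else if i = j then a i - b i else b i := by
  have h := prod_add_ordered univ b (fun i => a i - b i)
  simp only [add_sub_cancel] at h
  rw [h, add_sub_cancel_left]
  refine sum_congr rfl fun j _ => ?_
  have hj : filter (fun i => ¬i < j ∧ i = j) univ = {j} := by ext; simp +contextual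
  have hgt : filter (fun i => ¬i = j) (filter (fun i => ¬i < j) univ) = filter (j < ·) univ := by
    ext i; simp only [mem_filter, mem_univ, true_and, not_lt]; grind
  rw [prod_ite, prod_ite, filter_filter, hj, hgt, prod_singleton]
  ring

lemma abs_prod_le_abs_mul_abs {κ : Type*} [Fintype κ] [DecidableEq κ] (c : κ → ℝ) {i₀ j : κ}
    (hi₀ : i₀ ≠ j) (hc : ∀ i, i ≠ j → |c i| ≤ 1) : |∏ i, c i| ≤ |c i₀| * |c j| := by
  have hi₀' : i₀ ∈ univ.erase j := mem_erase.mpr ⟨hi₀, mem_univ _⟩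
  rw [abs_prod, ← mul_prod_erase _ _ (mem_univ j), ← mul_prod_erase _ _ hi₀', mul_comm]
  gcongr
  refine mul_le_of_le_one_right (abs_nonneg _) (prod_le_one (fun _ _ => abs_nonneg _) ?_)
  exact fun i hi => hc i (mem_erase.mp (mem_of_mem_erase hi)).1

lemma dot_self_eq_sum_sq {D : ℕ} (u : Fin D → ℝ) : dot u u = ∑ i, u i ^ 2 := by
  simp only [dot, sq]

lemma dot_self_nonneg {D : ℕ} (u : Fin D → ℝ) : 0 ≤ dot u u :=
  sum_nonneg fun i _ => mul_self_nonneg (u i)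

lemma abs_dot_le_one {D : ℕ} {u v : Fin D → ℝ} (hu : dot u u = 1) (hv : dot v v = 1) :
    |dot u v| ≤ 1 := by
  have h : dot u v ^ 2 ≤ dot u u * dot v v := by
    simpa only [dot, sq] using sum_mul_sq_le_sq_mul_sq univ u v
  rw [hu, hv, mul_one] at h
  exact (sq_le_one_iff_abs_le_one _).mp h

section PureTensor

variable {ι : Type*} {r : ℕ}

/-- The elementary tensor `u 0 ⊗ ⋯ ⊗ u (r-1)` of `(ℝ^ι)^{⊗r}`, in coordinates. -/
def pureTensor (u : Fin r → ι → ℝ) : EuclideanSpace ℝ (Fin r → ι) :=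
  WithLp.toLp 2 fun f => ∏ i, u i (f i)

lemma inner_pureTensor [Fintype ι] (u v : Fin r → ι → ℝ) :
    ⟪pureTensor u, pureTensor v⟫ = ∏ i, ∑ x, u i x * v i x := by
  simp only [pureTensor, PiLp.inner_apply, RCLike.inner_apply, conj_trivial,
    Fintype.prod_sum, ← prod_mul_distrib]
  exact sum_congr rfl fun f _ => prod_congr rfl fun i _ => mul_comm _ _

def telescopeTerm (a b : ι → ℝ) (j : Fin r) : EuclideanSpace ℝ (Fin r → ι) :=
  pureTensor fun i => if i < j then a else if i = j then a - b else b

lemma pureTensor_const_sub_pureTensor_const (a b : ι → ℝ) :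
    pureTensor (fun _ : Fin r => a) - pureTensor (fun _ => b) = ∑ j, telescopeTerm a b j := by
  ext f
  simp only [telescopeTerm, pureTensor, PiLp.sub_apply, WithLp.ofLp_sum, Finset.sum_apply]
  convert prod_sub_prod_eq_sum (fun i => a (f i)) (fun i => b (f i)) using 4
  split_ifs <;> rfl

end PureTensor

lemma deltaF2_nonneg {D m : ℕ} (w wh : Fin m → Fin D → ℝ) : 0 ≤ deltaF2 w wh :=
  sum_nonneg fun _ _ => sum_nonneg fun _ _ => sq_nonneg _

lemma deltaO_nonneg {D m : ℕ} (w wh : Fin m → Fin D → ℝ) : 0 ≤ deltaO w wh :=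
  sum_nonneg fun _ _ => sum_nonneg fun _ _ => by split_ifs <;> positivity

section UnitVectors

variable {D r : ℕ}

lemma inner_pureTensor_const (u v : Fin D → ℝ) :
    ⟪pureTensor (fun _ : Fin r => u), pureTensor fun _ => v⟫ = dot u v ^ r := by
  rw [inner_pureTensor, prod_const, card_univ, Fintype.card_fin]
  rfl

lemma inner_telescopeTerm (a b a' b' : Fin D → ℝ) (j : Fin r) :
    ⟪telescopeTerm a b j, telescopeTerm a' b' j⟫ =
      ∏ i, if i < j then dot a a' else if i = j then dot (a - b) (a' - b') else dot b b' := by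
  rw [telescopeTerm, telescopeTerm, inner_pureTensor]
  exact prod_congr rfl fun i _ => by split_ifs <;> rfl

lemma inner_telescopeTerm_self {a b : Fin D → ℝ} (ha : dot a a = 1) (hb : dot b b = 1)
    (j : Fin r) : ⟪telescopeTerm a b j, telescopeTerm a b j⟫ = dot (a - b) (a - b) := by
  rw [inner_telescopeTerm, prod_eq_single j (fun i _ hij => by simp [hij, ha, hb]) (by simp)]
  simp

lemma abs_inner_telescopeTerm_le (hr : 2 ≤ r) {a b a' b' : Fin D → ℝ} {ε : ℝ}
    (ha : dot a a = 1) (hb : dot b b = 1) (ha' : dot a' a' = 1) (hb' : dot b' b' = 1)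
    (haa' : dot a a' ^ 2 ≤ ε) (hbb' : dot b b' ^ 2 ≤ ε) (j : Fin r) :
    |⟪telescopeTerm a b j, telescopeTerm a' b' j⟫| ≤ √ε * |dot (a - b) (a' - b')| := by
  have : Nontrivial (Fin r) := Fin.nontrivial_iff_two_le.mpr hr
  obtain ⟨i₀, hi₀⟩ := exists_ne j
  rw [inner_telescopeTerm]
  refine (abs_prod_le_abs_mul_abs _ hi₀ fun i hij => ?_).trans ?_
  · simp only [hij, if_false]
    split_ifs
    exacts [abs_dot_le_one ha ha', abs_dot_le_one hb hb']
  · simp only [hi₀, lt_irrefl, if_true, if_false]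
    gcongr
    split_ifs
    exacts [Real.abs_le_sqrt haa', Real.abs_le_sqrt hbb']

variable {m : ℕ} {w wh : Fin m → Fin D → ℝ} {ε : ℝ}

lemma sum_sum_abs_inner_telescopeTerm_le (hr : 2 ≤ r) (hw : ∀ k, dot (w k) (w k) = 1)
    (hwh : ∀ k, dot (wh k) (wh k) = 1) (hww : ∀ k l, k ≠ l → dot (w k) (w l) ^ 2 ≤ ε)
    (hwhwh : ∀ k l, k ≠ l → dot (wh k) (wh l) ^ 2 ≤ ε) (j : Fin r) :
    ∑ k, ∑ k', |⟪telescopeTerm (wh k) (w k) j, telescopeTerm (wh k') (w k') j⟫| ≤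
      deltaF2 w wh + √ε * deltaO w wh := by
  have hterm : ∀ k k', |⟪telescopeTerm (wh k) (w k) j, telescopeTerm (wh k') (w k') j⟫| ≤
      (if k = k' then dot (wh k - w k) (wh k - w k) else 0) +
        √ε * if k = k' then 0 else |dot (wh k - w k) (wh k' - w k')| := by
    intro k k'
    by_cases h : k = k'
    · subst h
      rw [inner_telescopeTerm_self (hwh k) (hw k), if_pos rfl, if_pos rfl, mul_zero, add_zero,
        abs_of_nonneg (dot_self_nonneg _)]
    · simpa [h] using abs_inner_telescopeTerm_le hr (hwh k) (hw k) (hwh k') (hw k')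
        (hwhwh k k' h) (hww k k' h) j
  calc _ ≤ _ := sum_le_sum fun k _ => sum_le_sum fun k' _ => hterm k k'
    _ = deltaF2 w wh + √ε * deltaO w wh := by
      simp only [sum_add_distrib, sum_ite_eq, mem_univ, if_true, ← mul_sum, deltaO]
      congr 1
      simp [deltaF2, dot, sq]

lemma norm_sum_smul_sub_pureTensor_sq_le (hr : 2 ≤ r) (hw : ∀ k, dot (w k) (w k) = 1)
    (hwh : ∀ k, dot (wh k) (wh k) = 1) (hww : ∀ k l, k ≠ l → dot (w k) (w l) ^ 2 ≤ ε)
    (hwhwh : ∀ k l, k ≠ l → dot (wh k) (wh l) ^ 2 ≤ ε) {μ : Fin m → ℝ} {B : ℝ}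
    (hμ : ∀ k, |μ k| ≤ B) :
    ‖∑ k, μ k • (pureTensor (fun _ : Fin r => wh k) - pureTensor fun _ => w k)‖ ^ 2 ≤
      r ^ 2 * (B ^ 2 * (deltaF2 w wh + √ε * deltaO w wh)) := by
  set U : Fin r → EuclideanSpace ℝ (Fin r → Fin D) :=
    fun j => ∑ k, μ k • telescopeTerm (wh k) (w k) j
  have hU : ∀ j, ‖U j‖ ^ 2 ≤ B ^ 2 * (deltaF2 w wh + √ε * deltaO w wh) := fun j =>
    (norm_sum_smul_sq_le_of_abs_le hμ _).trans <| by
      gcongr; exact sum_sum_abs_inner_telescopeTerm_le hr hw hwh hww hwhwh j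
  have hsum : ∑ k, μ k • (pureTensor (fun _ : Fin r => wh k) - pureTensor fun _ => w k) =
      ∑ j, U j := by
    simp_rw [U, pureTensor_const_sub_pureTensor_const, smul_sum]
    exact sum_comm
  calc _ = ‖∑ j, U j‖ ^ 2 := by rw [hsum]
    _ ≤ (∑ j, ‖U j‖) ^ 2 := by gcongr; exact norm_sum_le _ _
    _ ≤ r * ∑ j, ‖U j‖ ^ 2 := by simpa using sq_sum_le_card_mul_sum_sq (s := univ) (f := (‖U ·‖))
    _ ≤ r * ∑ _j : Fin r, B ^ 2 * (deltaF2 w wh + √ε * deltaO w wh) := by gcongr with j; exact hU j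
    _ = _ := by simp; ring

lemma sum_sq_sum_mul_sub_pow_le (hr : 2 ≤ r) (hε : 0 ≤ ε) (hw : ∀ k, dot (w k) (w k) = 1)
    (hwh : ∀ k, dot (wh k) (wh k) = 1) (hww : ∀ k l, k ≠ l → dot (w k) (w l) ^ 2 ≤ ε)
    (hwhwh : ∀ k l, k ≠ l → dot (wh k) (wh l) ^ 2 ≤ ε) {μ : Fin m → ℝ} {B : ℝ}
    (hμ : ∀ k, |μ k| ≤ B) :
    ∑ l, (∑ k, μ k * (dot (wh k) (wh l) ^ r - dot (w k) (wh l) ^ r)) ^ 2 ≤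
      (1 + m * ε) * (r ^ 2 * (B ^ 2 * (deltaF2 w wh + √ε * deltaO w wh))) := by
  set T := ∑ k, μ k • (pureTensor (fun _ : Fin r => wh k) - pureTensor fun _ => w k)
  have hT : ∀ l, ∑ k, μ k * (dot (wh k) (wh l) ^ r - dot (w k) (wh l) ^ r) =
      ⟪T, pureTensor fun _ => wh l⟫ := by
    simp [T, sum_inner, real_inner_smul_left, inner_sub_left, inner_pureTensor_const]
  have hnorm : ∀ l, ‖pureTensor (fun _ : Fin r => wh l)‖ ≤ 1 := by
    intro l
    have h := inner_pureTensor_const (r := r) (wh l) (wh l)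
    rw [hwh, one_pow, real_inner_self_eq_norm_sq,
      pow_eq_one_iff_of_nonneg (norm_nonneg _) two_ne_zero] at h
    exact h.le
  have hinner : ∀ l l', l ≠ l' →
      |⟪pureTensor (fun _ : Fin r => wh l), pureTensor fun _ => wh l'⟫| ≤ ε := by
    intro l l' h
    rw [inner_pureTensor_const, abs_pow]
    calc |dot (wh l) (wh l')| ^ r ≤ |dot (wh l) (wh l')| ^ 2 :=
          pow_le_pow_of_le_one (abs_nonneg _) (abs_dot_le_one (hwh l) (hwh l')) hr
      _ ≤ ε := by rw [sq_abs]; exact hwhwh l l' h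
  simp_rw [hT]
  refine (sum_inner_sq_le_of_abs_inner_le hε hnorm hinner T).trans ?_
  rw [Fintype.card_fin]
  gcongr
  exact norm_sum_smul_sub_pureTensor_sq_le hr hw hwh hww hwhwh hμ

end UnitVectors

lemma abs_apply_add_le {g : ℝ → ℝ} (hg : Differentiable ℝ g) {K a τ : ℝ}
    (hK : ∀ t, |deriv g t| ≤ K) (hτ : τ ∈ Set.Icc (-a) a) (y : ℝ) :
    |g (y + τ)| ≤ |g 0| + K * a + K * |y| := by
  have hK0 : 0 ≤ K := (abs_nonneg _).trans (hK 0)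
  have hshift : |y + τ| ≤ |y| + a := (abs_add_le _ _).trans (by gcongr; exact abs_le.mpr hτ)
  have hlip : |g (y + τ) - g 0| ≤ K * |y + τ| := by
    simpa using Convex.norm_image_sub_le_of_norm_deriv_le (fun t _ => hg t) (fun t _ => hK t)
      convex_univ (Set.mem_univ 0) (Set.mem_univ (y + τ))
  nlinarith [abs_sub_abs_le_abs_sub (g (y + τ)) (g 0)]

lemma one_add_mul_mul_add_sqrt_mul_le {m c ρ X Y : ℝ} (hc : 0 ≤ c) (hmρ : 1 ≤ m * ρ)
    (hX : 0 ≤ X) (hY : 0 ≤ Y) :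
    (1 + m * (c * ρ)) * (X + √(c * ρ) * Y) ≤ (1 + c) * (1 + √c) * (m * ρ * (X + √ρ * Y)) := by
  have h1 : 1 + m * (c * ρ) ≤ (1 + c) * (m * ρ) := by nlinarith
  have h2 : X + √(c * ρ) * Y ≤ (1 + √c) * (X + √ρ * Y) := by
    rw [Real.sqrt_mul hc]
    nlinarith [Real.sqrt_nonneg c, Real.sqrt_nonneg ρ, mul_nonneg (Real.sqrt_nonneg ρ) hY]
  calc _ ≤ (1 + c) * (m * ρ) * ((1 + √c) * (X + √ρ * Y)) := by gcongr
    _ = _ := by ring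

lemma sum_Sterm_sq_le {D m r : ℕ} {w wh : Fin m → Fin D → ℝ} {c ρ : ℝ} (hr : 2 ≤ r)
    (hc : 0 ≤ c) (hmρ : 1 ≤ m * ρ) (hw : ∀ k, dot (w k) (w k) = 1)
    (hwh : ∀ k, dot (wh k) (wh k) = 1) (hww : ∀ k l, k ≠ l → dot (w k) (w l) ^ 2 ≤ c * ρ)
    (hwhwh : ∀ k l, k ≠ l → dot (wh k) (wh l) ^ 2 ≤ c * ρ) (g : ℝ → ℝ) (τ τh : Fin m → ℝ)
    {A B : ℝ} (hA : ∀ k, |hermiteCoeff (fun t => g (t + τ k)) r| ≤ A)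
    (hB : ∀ l, |hermiteCoeff (fun t => deriv g (t + τh l)) r| ≤ B) :
    ∑ l, Sterm g w wh τ τh r l ^ 2 ≤ B ^ 2 * (r ^ 2 * A ^ 2) * ((1 + c) * (1 + √c)) *
      (m * ρ * (deltaF2 w wh + √ρ * deltaO w wh)) := by
  have hρ : 0 ≤ ρ := by nlinarith [(Nat.cast_nonneg m : (0 : ℝ) ≤ m)]
  set β : Fin m → ℝ := fun l => ∑ k, hermiteCoeff (fun t => g (t + τ k)) r *
    (dot (wh k) (wh l) ^ r - dot (w k) (wh l) ^ r)
  have hS : ∀ l, Sterm g w wh τ τh r l = hermiteCoeff (fun t => deriv g (t + τh l)) r * β l :=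
    fun l => by simp only [Sterm, β, mul_sum]; exact sum_congr rfl fun k _ => by ring
  have hβ := sum_sq_sum_mul_sub_pow_le hr (mul_nonneg hc hρ) hw hwh hww hwhwh hA
  calc ∑ l, Sterm g w wh τ τh r l ^ 2 ≤ ∑ l, B ^ 2 * β l ^ 2 := by
        refine sum_le_sum fun l _ => ?_
        rw [hS, mul_pow, ← sq_abs (hermiteCoeff _ r)]
        gcongr
        exact hB l
    _ ≤ B ^ 2 * (r ^ 2 * A ^ 2) *
          ((1 + m * (c * ρ)) * (deltaF2 w wh + √(c * ρ) * deltaO w wh)) := by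
        rw [← mul_sum]
        exact (mul_le_mul_of_nonneg_left hβ (sq_nonneg B)).trans_eq (by ring)
    _ ≤ _ := by
        rw [mul_assoc _ ((1 + c) * _)]
        exact mul_le_mul_of_nonneg_left (one_add_mul_mul_add_sqrt_mul_le hc hmρ
          (deltaF2_nonneg w wh) (deltaO_nonneg w wh)) (by positivity)

theorem Sterm_truncated_series_bound_general
    (g : ℝ → ℝ) (tinf : ℝ) (hM1 : CondM1 g tinf)
    (c₂ : ℝ) (hc₂ : 0 < c₂) (R : ℕ) :
    ∃ C : ℝ, 0 < C ∧
      ∀ (D m : ℕ), 2 ≤ D → D ≤ m → (D : ℝ) ≤ (m : ℝ) * Real.log m →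
      ∀ (w wh : Fin m → Fin D → ℝ) (τ τh : Fin m → ℝ),
        (∀ k, ∑ i, (w k i) ^ 2 = 1) → (∀ k, ∑ i, (wh k i) ^ 2 = 1) →
        (∀ k l, k ≠ l → (dot (w k) (w l)) ^ 2 ≤ c₂ * Real.log m / D) →
        (∀ k l, k ≠ l → (dot (wh k) (wh l)) ^ 2 ≤ c₂ * Real.log m / D) →
        (∀ k l, k ≠ l → (dot (wh k) (w l)) ^ 2 ≤ c₂ * Real.log m / D) →
        (∀ k, τ k ∈ Set.Icc (-tinf) tinf) → (∀ k, τh k ∈ Set.Icc (-tinf) tinf) →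
        ∑ r ∈ Finset.Icc 2 R, (2 : ℝ) ^ r * ∑ l, (Sterm g w wh τ τh r l) ^ 2 ≤
          C * m * Real.log m / D *
            (deltaF2 w wh + Real.sqrt (Real.log m / D) * deltaO w wh) := by
  obtain ⟨K, hK⟩ : ∃ K, ∀ t, |deriv g t| ≤ K := by simpa using hM1.2.1 1 (by simp)
  have hg : Differentiable ℝ g := hM1.1.differentiable (by norm_num)
  choose A hA using fun r => exists_abs_hermiteCoeff_le r (|g 0| + K * tinf) K
  choose B hB using fun r => exists_abs_hermiteCoeff_le r K 0
  set C₀ := ∑ r ∈ Icc 2 R, (2 : ℝ) ^ r * (B r ^ 2 * (r ^ 2 * A r ^ 2)) * ((1 + c₂) * (1 + √c₂))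
  refine ⟨C₀ + 1, by positivity, ?_⟩
  intro D m hD _ hDlog w wh τ τh hw hwh hww hwhwh _ hτ hτh
  have hDpos : (0 : ℝ) < D := by exact_mod_cast (by omega : 0 < D)
  set ρ := Real.log m / D
  have hmρ : 1 ≤ m * ρ := by rwa [← mul_div_assoc, le_div_iff₀ hDpos, one_mul]
  have hε : c₂ * Real.log m / D = c₂ * ρ := mul_div_assoc _ _ _
  set M := m * ρ * (deltaF2 w wh + √ρ * deltaO w wh)
  have hM : 0 ≤ M := by
    have := deltaF2_nonneg w wh; have := deltaO_nonneg w wh; positivity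
  calc _ ≤ ∑ r ∈ Icc 2 R, (2 : ℝ) ^ r *
          (B r ^ 2 * (r ^ 2 * A r ^ 2) * ((1 + c₂) * (1 + √c₂)) * M) := by
        gcongr with r hr
        exact sum_Sterm_sq_le (mem_Icc.mp hr).1 hc₂.le hmρ (fun k => hw k ▸ dot_self_eq_sum_sq _)
          (fun k => hwh k ▸ dot_self_eq_sum_sq _) (by simpa only [hε] using hww)
          (by simpa only [hε] using hwhwh) g τ τh (fun k => hA r _ (abs_apply_add_le hg hK (hτ k)))
          (fun l => hB r _ fun y => by simpa using hK _)
    _ = C₀ * M := by rw [sum_mul]; exact sum_congr rfl fun r _ => by ring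
    _ ≤ (C₀ + 1) * M := by gcongr; linarith
    _ = _ := by ring

/-- Bound on the truncated weighted series `Σ_{r=2}^R 2^r Σ_ℓ S_{r,ℓ}²`. -/
theorem Sterm_truncated_series_bound
    (g : ℝ → ℝ) (tinf : ℝ) (htinf : 0 < tinf) (hM1 : CondM1 g tinf) (hM2 : CondM2 g)
    (c₂ : ℝ) (hc₂ : 0 < c₂) (R : ℕ) (hR : 2 ≤ R) :
    ∃ C : ℝ, 0 < C ∧
      ∀ (D m : ℕ), 2 ≤ D → D ≤ m → (D : ℝ) ≤ (m : ℝ) * Real.log m →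
      ∀ (w wh : Fin m → Fin D → ℝ) (τ τh : Fin m → ℝ),
        (∀ k, ∑ i, (w k i) ^ 2 = 1) → (∀ k, ∑ i, (wh k i) ^ 2 = 1) →
        (∀ k l, k ≠ l → (dot (w k) (w l)) ^ 2 ≤ c₂ * Real.log m / D) →
        (∀ k l, k ≠ l → (dot (wh k) (wh l)) ^ 2 ≤ c₂ * Real.log m / D) →
        (∀ k l, k ≠ l → (dot (wh k) (w l)) ^ 2 ≤ c₂ * Real.log m / D) →
        (∀ k, τ k ∈ Set.Icc (-tinf) tinf) → (∀ k, τh k ∈ Set.Icc (-tinf) tinf) →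
        ∑ r ∈ Finset.Icc 2 R, (2 : ℝ) ^ r * ∑ l, (Sterm g w wh τ τh r l) ^ 2 ≤
          C * m * Real.log m / D *
            (deltaF2 w wh + Real.sqrt (Real.log m / D) * deltaO w wh) :=
  Sterm_truncated_series_bound_general g tinf hM1 c₂ hc₂ R
end

section
/- Let τ∞ > 0 and let g : ℝ → ℝ satisfy (M1) and (M2). Then there exists a constant C > 0 depending only on g and τ∞ such that for every m ∈ ℕ, every τ_1, …, τ_m, τ̂_1, …, τ̂_m ∈ [−τ∞, τ∞], and every R ≥ 4, the series Σ_{r≥R} r · max_{k,ℓ∈[m]} |μ_r(g_{τ_k}) μ_r(g'_{τ̂_ℓ})| converges and is at most C. -/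
open scoped BigOperators
open MeasureTheory ProbabilityTheory

/-!
With `φ t = exp (-t² / 2)` the definition of `hermitePoly` reads `h_r φ = (-1)^r φ^{(r)} / √r!`,
so moving derivatives from `φ^{(k+n)}` onto `f` by `n` integrations by parts gives
`μ_{k+n}(f) = √(k! / (k+n)!) μ_k(f^{(n)})`. Moreover `|μ_k(f)| ≤ sup |f|`, because
`‖h_k‖_{L¹(γ)} ≤ ‖h_k‖_{L²(γ)} = 1`, the norm being computed by the same integration by parts.
Taking `n = 3` for `g_τ` and `n = 2` for `g'_τ` bounds the `r`-th summand by `κ² (r - 2)^{-3/2}`,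
uniformly in the shifts.
-/

open Real Polynomial
open scoped Nat

noncomputable def gaussianExp (t : ℝ) : ℝ := exp (-(t ^ 2) / 2)

noncomputable def hermiteReal (k : ℕ) : ℝ[X] := (hermite k).map (Int.castRingHom ℝ)

lemma iterate_derivative_hermiteReal_self (k : ℕ) :
    derivative^[k] (hermiteReal k) = C (k ! : ℝ) := by
  have hdeg : (derivative^[k] (hermiteReal k)).natDegree = 0 := by
    have := natDegree_iterate_derivative (hermiteReal k) k
    have : (hermiteReal k).natDegree ≤ k := natDegree_map_le.trans natDegree_hermite.le
    omega
  rw [eq_C_of_natDegree_eq_zero hdeg, coeff_iterate_derivative]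
  simp [hermiteReal, Nat.descFactorial_self]

lemma iteratedDeriv_gaussianExp (k : ℕ) (y : ℝ) :
    iteratedDeriv k gaussianExp y = (-1) ^ k * (hermiteReal k).eval y * gaussianExp y := by
  have h : gaussianExp = fun t => exp (-(t ^ 2 / 2)) := by
    funext t; rw [gaussianExp, neg_div]
  rw [h, iteratedDeriv_eq_iterate, deriv_gaussian_eq_hermite_mul_gaussian, hermiteReal,
    eval_map, aeval_def, algebraMap_int_eq]

lemma contDiff_gaussianExp : ContDiff ℝ ⊤ gaussianExp := by
  unfold gaussianExp; fun_prop

lemma hasDerivAt_iteratedDeriv_gaussianExp (k : ℕ) (y : ℝ) :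
    HasDerivAt (iteratedDeriv k gaussianExp) (iteratedDeriv (k + 1) gaussianExp y) y := by
  rw [iteratedDeriv_succ]
  exact (contDiff_gaussianExp.differentiable_iteratedDeriv k (by simp) y).hasDerivAt

lemma integral_gaussianExp : ∫ y, gaussianExp y = √(2 * π) := by
  have h : gaussianExp = fun y => exp (-(1 / 2) * y ^ 2) := by
    funext y; rw [gaussianExp]; ring_nf
  rw [h, integral_gaussian]
  ring_nf

lemma integrable_pow_mul_gaussianExp (n : ℕ) : Integrable fun y => y ^ n * gaussianExp y := by
  have := integrable_rpow_mul_exp_neg_mul_sq (b := 1 / 2) (by norm_num) (s := n)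
    (by linarith [n.cast_nonneg (α := ℝ)])
  simp only [rpow_natCast] at this
  refine this.congr (ae_of_all _ fun y => ?_)
  simp only [gaussianExp]; ring_nf

lemma integrable_gaussianExp : Integrable gaussianExp := by
  simpa using integrable_pow_mul_gaussianExp 0

lemma integrable_polynomial_mul_gaussianExp (p : ℝ[X]) :
    Integrable fun y => p.eval y * gaussianExp y := by
  simp only [eval_eq_sum_range, Finset.sum_mul, mul_assoc]
  exact integrable_finsetSum _ fun i _ => (integrable_pow_mul_gaussianExp i).const_mul _

lemma integrable_iteratedDeriv_gaussianExp (k : ℕ) :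
    Integrable (iteratedDeriv k gaussianExp) := by
  refine ((integrable_polynomial_mul_gaussianExp (hermiteReal k)).const_mul ((-1) ^ k)).congr
    (ae_of_all _ fun y => ?_)
  rw [iteratedDeriv_gaussianExp, mul_assoc]

lemma integrable_mul_iteratedDeriv_gaussianExp {f : ℝ → ℝ} (hf : AEStronglyMeasurable f)
    {p : ℝ[X]} (hfp : ∀ y, |f y| ≤ |p.eval y|) (k : ℕ) :
    Integrable fun y => f y * iteratedDeriv k gaussianExp y := by
  refine (integrable_polynomial_mul_gaussianExp (p * hermiteReal k)).abs.mono'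
    (hf.mul (contDiff_gaussianExp.continuous_iteratedDeriv k (by simp)).aestronglyMeasurable)
    (ae_of_all _ fun y => ?_)
  simp only [iteratedDeriv_gaussianExp, eval_mul, norm_eq_abs, abs_mul, abs_neg_one_pow, mul_one,
    ← mul_assoc]
  exact mul_le_mul_of_nonneg_right (mul_le_mul_of_nonneg_right (hfp y) (abs_nonneg _))
    (abs_nonneg _)

theorem integral_mul_iteratedDeriv_gaussianExp_add {F : ℕ → ℝ → ℝ} {n : ℕ}
    (hderiv : ∀ j < n, ∀ y, HasDerivAt (F j) (F (j + 1) y) y)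
    (hint : ∀ j ≤ n, ∀ i, Integrable fun y => F j y * iteratedDeriv i gaussianExp y) (k : ℕ) :
    ∫ y, F 0 y * iteratedDeriv (k + n) gaussianExp y =
      (-1) ^ n * ∫ y, F n y * iteratedDeriv k gaussianExp y := by
  induction n generalizing k with
  | zero => simp
  | succ n ih =>
    have hparts : ∫ y, F n y * iteratedDeriv (k + 1) gaussianExp y =
        -∫ y, F (n + 1) y * iteratedDeriv k gaussianExp y :=
      integral_mul_deriv_eq_deriv_mul_of_integrable (fun y _ => hderiv n n.lt_succ_self y)
        (fun y _ => hasDerivAt_iteratedDeriv_gaussianExp k y) (hint n n.le_succ _)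
        (hint (n + 1) le_rfl k) (hint n n.le_succ k)
    rw [← add_assoc, add_right_comm, ih (fun j hj => hderiv j (by omega))
      (fun j hj => hint j (by omega)), hparts, pow_succ]
    ring

lemma integral_sq_hermiteReal_mul_gaussianExp (k : ℕ) :
    ∫ y, (hermiteReal k).eval y ^ 2 * gaussianExp y = k ! * √(2 * π) := by
  have h := integral_mul_iteratedDeriv_gaussianExp_add
    (F := fun j y => (derivative^[j] (hermiteReal k)).eval y) (n := k)
    (fun j _ y => by simpa only [Function.iterate_succ_apply'] using Polynomial.hasDerivAt _ y)
    (fun j _ i => integrable_mul_iteratedDeriv_gaussianExp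
      (Polynomial.continuous _).aestronglyMeasurable (fun _ => le_rfl) i) 0
  have hsign : ((-1 : ℝ) ^ k) * (-1) ^ k = 1 := by rw [← mul_pow]; norm_num
  simp only [zero_add, Function.iterate_zero_apply, iterate_derivative_hermiteReal_self, eval_C,
    iteratedDeriv_zero, integral_const_mul, integral_gaussianExp] at h
  calc ∫ y, (hermiteReal k).eval y ^ 2 * gaussianExp y
      = (-1) ^ k * ∫ y, (hermiteReal k).eval y * iteratedDeriv k gaussianExp y := by
        rw [← integral_const_mul]
        congr 1 with y
        rw [iteratedDeriv_gaussianExp]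
        linear_combination (-(hermiteReal k).eval y ^ 2 * gaussianExp y) * hsign
    _ = k ! * √(2 * π) := by
        rw [h, ← mul_assoc, hsign, one_mul]

lemma integral_abs_iteratedDeriv_gaussianExp_le (k : ℕ) :
    ∫ y, |iteratedDeriv k gaussianExp y| ≤ √(k ! : ℝ) * √(2 * π) := by
  set s := √(k ! : ℝ)
  have hs : 0 < s := by positivity
  have hss : s ^ 2 = k ! := sq_sqrt (by positivity)
  have hsq := integrable_polynomial_mul_gaussianExp (hermiteReal k ^ 2)
  have hamgm : ∀ u : ℝ, |u| ≤ (u ^ 2 / s + s) / 2 := fun u => by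
    rw [div_add' _ _ _ hs.ne', div_div, le_div_iff₀ (by positivity), ← sq_abs u]
    nlinarith [sq_nonneg (|u| - s)]
  calc ∫ y, |iteratedDeriv k gaussianExp y|
      ≤ ∫ y, ((hermiteReal k ^ 2).eval y * gaussianExp y / s + s * gaussianExp y) / 2 := by
        refine integral_mono (integrable_iteratedDeriv_gaussianExp k).abs (((hsq.div_const s).add
          (integrable_gaussianExp.const_mul s)).div_const 2) fun y => ?_
        have hφ : 0 < gaussianExp y := exp_pos _
        rw [iteratedDeriv_gaussianExp, abs_mul, abs_mul, abs_neg_one_pow, one_mul, abs_of_pos hφ,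
          eval_pow]
        calc |(hermiteReal k).eval y| * gaussianExp y
            ≤ (((hermiteReal k).eval y ^ 2 / s + s) / 2) * gaussianExp y :=
              mul_le_mul_of_nonneg_right (hamgm _) hφ.le
          _ = _ := by ring
    _ = s * √(2 * π) := by
        rw [integral_div, integral_add (hsq.div_const s) (integrable_gaussianExp.const_mul s),
          integral_div, integral_const_mul]
        simp only [eval_pow]
        rw [integral_sq_hermiteReal_mul_gaussianExp, integral_gaussianExp, ← hss]
        field_simp
        ring

lemma hermiteCoeff_eq_integral (h : ℝ → ℝ) (r : ℕ) :
    hermiteCoeff h r =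
      (-1) ^ r / (√(2 * π) * √(r ! : ℝ)) * ∫ y, h y * iteratedDeriv r gaussianExp y := by
  rw [hermiteCoeff, integral_gaussianReal_eq_integral_smul one_ne_zero, ← integral_const_mul]
  congr 1 with y
  have hexp : exp (-y ^ 2 / 2) * exp (y ^ 2 / 2) = 1 := by
    rw [← exp_add]; ring_nf; exact exp_zero
  unfold gaussianExp
  simp only [gaussianPDFReal, hermitePoly, smul_eq_mul, NNReal.coe_one, mul_one, sub_zero]
  linear_combination ((√(2 * π))⁻¹ * (√(r ! : ℝ))⁻¹ * (-1) ^ r * h y *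
    iteratedDeriv r (fun t => exp (-(t ^ 2) / 2)) y) * hexp

theorem abs_hermiteCoeff_add_le {F : ℕ → ℝ → ℝ} {n : ℕ}
    (hderiv : ∀ j < n, ∀ y, HasDerivAt (F j) (F (j + 1) y) y)
    (hint : ∀ j ≤ n, ∀ i, Integrable fun y => F j y * iteratedDeriv i gaussianExp y)
    {B : ℝ} (hB : ∀ y, |F n y| ≤ B) (k : ℕ) :
    |hermiteCoeff (F 0) (k + n)| ≤ B * √(k ! : ℝ) / √((k + n)! : ℝ) := by
  have hbound : |∫ y, F n y * iteratedDeriv k gaussianExp y| ≤ B * (√(k ! : ℝ) * √(2 * π)) := by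
    rw [← norm_eq_abs]
    calc ‖∫ y, F n y * iteratedDeriv k gaussianExp y‖
        ≤ ∫ y, B * |iteratedDeriv k gaussianExp y| := by
          refine norm_integral_le_of_norm_le
            ((integrable_iteratedDeriv_gaussianExp k).abs.const_mul B) (ae_of_all _ fun y => ?_)
          rw [norm_mul, norm_eq_abs, norm_eq_abs]
          exact mul_le_mul_of_nonneg_right (hB y) (abs_nonneg _)
      _ = B * ∫ y, |iteratedDeriv k gaussianExp y| := integral_const_mul _ _
      _ ≤ B * (√(k ! : ℝ) * √(2 * π)) :=
          mul_le_mul_of_nonneg_left (integral_abs_iteratedDeriv_gaussianExp_le k)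
            ((abs_nonneg _).trans (hB 0))
  rw [hermiteCoeff_eq_integral, integral_mul_iteratedDeriv_gaussianExp_add hderiv hint, abs_mul,
    abs_mul, abs_div, abs_neg_one_pow, abs_neg_one_pow, one_mul,
    abs_of_pos (by positivity : 0 < √(2 * π) * √((k + n)! : ℝ))]
  calc 1 / (√(2 * π) * √((k + n)! : ℝ)) * |∫ y, F n y * iteratedDeriv k gaussianExp y|
      ≤ 1 / (√(2 * π) * √((k + n)! : ℝ)) * (B * (√(k ! : ℝ) * √(2 * π))) := by gcongr
    _ = B * √(k ! : ℝ) / √((k + n)! : ℝ) := by field_simp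

section BoundedDerivatives

variable {g : ℝ → ℝ} {N : ℕ} {B : ℝ}

lemma abs_le_of_abs_deriv_le (hg : Differentiable ℝ g) (hB : ∀ t, |deriv g t| ≤ B) (t : ℝ) :
    |g t| ≤ |g 0| + B * |t| := by
  have h := Convex.norm_image_sub_le_of_norm_deriv_le (fun x _ => hg x) (fun x _ => hB x)
    convex_univ (Set.mem_univ 0) (Set.mem_univ t)
  simp only [norm_eq_abs, sub_zero] at h
  linarith [abs_sub_abs_le_abs_sub (g t) (g 0)]

lemma exists_abs_iteratedDeriv_comp_add_le_eval (hg : ContDiff ℝ N g) (hN : 0 < N)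
    (hB : ∀ j ∈ Finset.Icc 1 N, ∀ t, |iteratedDeriv j g t| ≤ B) {j : ℕ} (hj : j ≤ N) (τ : ℝ) :
    ∃ p : ℝ[X], ∀ t, |iteratedDeriv j g (t + τ)| ≤ |p.eval t| := by
  have hB0 : 0 ≤ B := (abs_nonneg _).trans (hB N (by simp; omega) 0)
  rcases j.eq_zero_or_pos with rfl | hj0
  · have hdiff : Differentiable ℝ g := hg.differentiable (by exact_mod_cast hN.ne')
    refine ⟨C (|g 0| + B * |τ| + B) + C B * X ^ 2, fun t => ?_⟩
    have hgrowth := abs_le_of_abs_deriv_le hdiff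
      (fun t => by simpa using hB 1 (by simp; omega) t) (t + τ)
    have : |t| ≤ 1 + t ^ 2 := by nlinarith [abs_nonneg t, sq_abs t]
    simp only [iteratedDeriv_zero, eval_add, eval_C, eval_mul, eval_pow, eval_X]
    rw [abs_of_nonneg (by positivity : 0 ≤ |g 0| + B * |τ| + B + B * t ^ 2)]
    nlinarith [abs_add_le t τ, mul_le_mul_of_nonneg_left this hB0]
  · exact ⟨C B, fun t => by simpa using (hB j (by simp; omega) _).trans (le_abs_self B)⟩

lemma hasDerivAt_iteratedDeriv_comp_add (hg : ContDiff ℝ N g) {j : ℕ} (hj : j < N) (τ t : ℝ) :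
    HasDerivAt (fun t => iteratedDeriv j g (t + τ)) (iteratedDeriv (j + 1) g (t + τ)) t := by
  rw [iteratedDeriv_succ]
  exact ((hg.differentiable_iteratedDeriv j (by exact_mod_cast hj)) _).hasDerivAt.comp_add_const
    t τ

lemma integrable_iteratedDeriv_comp_add_mul (hg : ContDiff ℝ N g) (hN : 0 < N)
    (hB : ∀ j ∈ Finset.Icc 1 N, ∀ t, |iteratedDeriv j g t| ≤ B) {j : ℕ} (hj : j ≤ N)
    (τ : ℝ) (i : ℕ) :
    Integrable fun t => iteratedDeriv j g (t + τ) * iteratedDeriv i gaussianExp t := by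
  obtain ⟨p, hp⟩ := exists_abs_iteratedDeriv_comp_add_le_eval hg hN hB hj τ
  exact integrable_mul_iteratedDeriv_gaussianExp
    ((hg.continuous_iteratedDeriv j (by exact_mod_cast hj)).comp
      (continuous_add_const τ)).aestronglyMeasurable hp i

theorem abs_hermiteCoeff_iteratedDeriv_comp_add_le (hg : ContDiff ℝ N g) (hN : 0 < N)
    (hB : ∀ j ∈ Finset.Icc 1 N, ∀ t, |iteratedDeriv j g t| ≤ B) {j n : ℕ} (hjn : j + n = N)
    (τ : ℝ) (k : ℕ) :
    |hermiteCoeff (fun t => iteratedDeriv j g (t + τ)) (k + n)| ≤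
      B * √(k ! : ℝ) / √((k + n)! : ℝ) :=
  abs_hermiteCoeff_add_le (F := fun i t => iteratedDeriv (j + i) g (t + τ))
    (fun i hi t => hasDerivAt_iteratedDeriv_comp_add hg (by omega) τ t)
    (fun i hi => integrable_iteratedDeriv_comp_add_mul hg hN hB (by omega) τ)
    (fun t => hB (j + n) (by simp; omega) _) k

end BoundedDerivatives

lemma summable_inv_natCast_add_one_rpow {p : ℝ} (hp : 1 < p) :
    Summable fun n : ℕ => (((n : ℝ) + 1) ^ p)⁻¹ := by
  have := (summable_nat_add_iff 1).mpr (Real.summable_nat_rpow_inv.mpr hp)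
  simpa using this

lemma natCast_add_three_mul_sqrt_factorial_div_le (k : ℕ) :
    ((k + 3 : ℕ) : ℝ) * (√(k ! : ℝ) / √((k + 3)! : ℝ)) * (√((k + 1)! : ℝ) / √((k + 3)! : ℝ)) ≤
      (((k : ℝ) + 1) ^ (3 / 2 : ℝ))⁻¹ := by
  refine le_of_pow_le_pow_left₀ two_ne_zero (by positivity) ?_
  have hrhs : ((((k : ℝ) + 1) ^ (3 / 2 : ℝ))⁻¹) ^ 2 = (((k : ℝ) + 1) ^ 3)⁻¹ := by
    rw [inv_pow, ← rpow_natCast, ← rpow_mul (by positivity)]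
    norm_num
  rw [hrhs, mul_pow, mul_pow, div_pow, div_pow, sq_sqrt (by positivity), sq_sqrt (by positivity),
    sq_sqrt (by positivity)]
  simp only [Nat.factorial_succ]
  push_cast
  field_simp
  rw [show (k : ℝ) + 2 + 1 = k + 3 by ring]
  gcongr
  linarith

theorem natCast_mul_iSup_abs_hermiteCoeff_mul_le {g : ℝ → ℝ} {B : ℝ} (hg : ContDiff ℝ 3 g)
    (hB : ∀ j ∈ Finset.Icc 1 3, ∀ t, |iteratedDeriv j g t| ≤ B) {ι κ : Type*}
    (τ : ι → ℝ) (σ : κ → ℝ) (k : ℕ) :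
    ((k + 3 : ℕ) : ℝ) * ⨆ i, ⨆ l,
      |hermiteCoeff (fun t => g (t + τ i)) (k + 3) *
        hermiteCoeff (fun t => deriv g (t + σ l)) (k + 3)| ≤
      B ^ 2 * (((k : ℝ) + 1) ^ (3 / 2 : ℝ))⁻¹ := by
  have hB0 : 0 ≤ B := (abs_nonneg _).trans (hB 1 (by simp) 0)
  have hbound : 0 ≤ B ^ 2 * (((k : ℝ) + 1) ^ (3 / 2 : ℝ))⁻¹ := by positivity
  rw [Real.mul_iSup_of_nonneg (by positivity)]
  refine Real.iSup_le (fun i => ?_) hbound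
  rw [Real.mul_iSup_of_nonneg (by positivity)]
  refine Real.iSup_le (fun l => ?_) hbound
  have hg0 := abs_hermiteCoeff_iteratedDeriv_comp_add_le hg three_pos hB (j := 0) (n := 3) rfl
    (τ i) k
  have hg1 := abs_hermiteCoeff_iteratedDeriv_comp_add_le hg three_pos hB (j := 1) (n := 2) rfl
    (σ l) (k + 1)
  simp only [iteratedDeriv_zero, iteratedDeriv_one] at hg0 hg1
  calc ((k + 3 : ℕ) : ℝ) * |hermiteCoeff (fun t => g (t + τ i)) (k + 3) *
        hermiteCoeff (fun t => deriv g (t + σ l)) (k + 3)|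
      ≤ ((k + 3 : ℕ) : ℝ) * ((B * √(k ! : ℝ) / √((k + 3)! : ℝ)) *
          (B * √((k + 1)! : ℝ) / √((k + 3)! : ℝ))) := by
        rw [abs_mul]
        gcongr
    _ = B ^ 2 * (((k + 3 : ℕ) : ℝ) * (√(k ! : ℝ) / √((k + 3)! : ℝ)) *
          (√((k + 1)! : ℝ) / √((k + 3)! : ℝ))) := by ring
    _ ≤ B ^ 2 * (((k : ℝ) + 1) ^ (3 / 2 : ℝ))⁻¹ := by
        gcongr
        exact natCast_add_three_mul_sqrt_factorial_div_le k

theorem hermite_tail_series_bound_general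
    (g : ℝ → ℝ) (tinf : ℝ) (hM1 : CondM1 g tinf) :
    ∃ C : ℝ, 0 < C ∧
      ∀ (m : ℕ) (τ τh : Fin m → ℝ),
        (∀ k, τ k ∈ Set.Icc (-tinf) tinf) → (∀ k, τh k ∈ Set.Icc (-tinf) tinf) →
        ∀ R : ℕ, 4 ≤ R →
          Summable (fun r : ℕ => ((r + R : ℕ) : ℝ) *
            ⨆ k : Fin m, ⨆ l : Fin m,
              |hermiteCoeff (fun t => g (t + τ k)) (r + R) *
                hermiteCoeff (fun t => deriv g (t + τh l)) (r + R)|) ∧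
          (∑' r : ℕ, ((r + R : ℕ) : ℝ) *
            ⨆ k : Fin m, ⨆ l : Fin m,
              |hermiteCoeff (fun t => g (t + τ k)) (r + R) *
                hermiteCoeff (fun t => deriv g (t + τh l)) (r + R)|) ≤ C := by
  obtain ⟨hg, hbdd, -⟩ := hM1
  choose! b hb using hbdd
  obtain ⟨B, hbB⟩ := ((Finset.Icc 1 3).image b).exists_le
  have hB : ∀ j ∈ Finset.Icc 1 3, ∀ t, |iteratedDeriv j g t| ≤ B :=
    fun j hj t => (hb j hj t).trans (hbB _ (Finset.mem_image_of_mem b hj))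
  set u : ℕ → ℝ := fun n => (((n : ℝ) + 1) ^ (3 / 2 : ℝ))⁻¹
  have hu : Summable u := summable_inv_natCast_add_one_rpow (by norm_num)
  have hu_anti : Antitone u := fun n n' h => by
    dsimp only [u]; gcongr
  refine ⟨B ^ 2 * ∑' n, u n + 1, by positivity, fun m τ τh _ _ R hR => ?_⟩
  have hterm := fun n => (natCast_mul_iSup_abs_hermiteCoeff_mul_le hg hB τ τh (n + (R - 3))).trans
    (mul_le_mul_of_nonneg_left (hu_anti (by omega : n ≤ n + (R - 3))) (sq_nonneg B))
  simp only [show ∀ n, n + (R - 3) + 3 = n + R by omega] at hterm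
  have hsum := (hu.mul_left (B ^ 2)).of_nonneg_of_le (fun n => mul_nonneg (Nat.cast_nonneg _)
    (Real.iSup_nonneg fun _ => Real.iSup_nonneg fun _ => abs_nonneg _)) hterm
  refine ⟨hsum, (hsum.tsum_le_tsum hterm (hu.mul_left _)).trans ?_⟩
  rw [tsum_mul_left]
  linarith

/-- The Hermite-coefficient tail series `Σ_{r ≥ R} r max_{k,ℓ} |μ_r(g_{τ_k}) μ_r(g'_{τ̂_ℓ})|`
converges and is bounded by a constant depending only on `g` and `τ∞`. -/
theorem hermite_tail_series_bound
    (g : ℝ → ℝ) (tinf : ℝ) (htinf : 0 < tinf) (hM1 : CondM1 g tinf) (hM2 : CondM2 g) :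
    ∃ C : ℝ, 0 < C ∧
      ∀ (m : ℕ) (τ τh : Fin m → ℝ),
        (∀ k, τ k ∈ Set.Icc (-tinf) tinf) → (∀ k, τh k ∈ Set.Icc (-tinf) tinf) →
        ∀ R : ℕ, 4 ≤ R →
          Summable (fun r : ℕ => ((r + R : ℕ) : ℝ) *
            ⨆ k : Fin m, ⨆ l : Fin m,
              |hermiteCoeff (fun t => g (t + τ k)) (r + R) *
                hermiteCoeff (fun t => deriv g (t + τh l)) (r + R)|) ∧
          (∑' r : ℕ, ((r + R : ℕ) : ℝ) *
            ⨆ k : Fin m, ⨆ l : Fin m,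
              |hermiteCoeff (fun t => g (t + τ k)) (r + R) *
                hermiteCoeff (fun t => deriv g (t + τh l)) (r + R)|) ≤ C :=
  hermite_tail_series_bound_general g tinf hM1
end
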